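/- arXiv:cs/9906018 — 9 statements merged into one kernel-verified Lean document; each statement's English description precedes it below -/
import Mathlib

section
/- Any strictly increasing chain α¹ ≺ α² ≺ ⋯ ≺ α^q of 0-1 vectors of length p, all with total sum t, has length q ≤ t(p−t)+1. -/
open Finset

lemma key_sum_aux (t : ℕ) : ∀ p, t ≤ p →
    ∑ k ∈ Finset.range p, min (1 + k) t
      = (∑ k ∈ Finset.range p, (t - (p - (1 + k)))) + t * (p - t) := by
  intro p hp
  induction p, hp using Nat.le_induction with
  | base =>
      rw [Nat.sub_self, mul_zero, add_zero]
      refine Finset.sum_congr rfl (fun k hk => ?_)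
      simp only [Finset.mem_range] at hk
      omega
  | succ p hp ih =>
      rw [Finset.sum_range_succ, ih]
      have h1 : ∑ k ∈ Finset.range (p + 1), (t - (p + 1 - (1 + k)))
          = ∑ k ∈ Finset.range p, (t - (p - (1 + k))) := by
        rw [Finset.sum_range_succ']
        have h0 : t - (p + 1 - (1 + 0)) = 0 := by omega
        rw [h0, add_zero]
        refine Finset.sum_congr rfl (fun k hk => ?_)
        omega
      rw [h1]
      have h2 : min (1 + p) t = t := min_eq_right (by omega)
      have h3 : p + 1 - t = (p - t) + 1 := by omega
      rw [h2, h3, mul_add, mul_one]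
      omega

/-- Any strictly increasing chain α¹ ≺ ⋯ ≺ α^q of 0-1 vectors of
length p, all with total sum t, has length q ≤ t(p−t)+1. -/
theorem stmt_2 (p q t : ℕ) (A : ℕ → ℕ → ℕ)
    (h01 : ∀ a ∈ Finset.Icc 1 q, ∀ i ∈ Finset.Icc 1 p, A a i ≤ 1)
    (hsum : ∀ a ∈ Finset.Icc 1 q, ∑ i ∈ Finset.Icc 1 p, A a i = t)
    (hchain : ∀ a, 1 ≤ a → a < q →
      (∀ k ∈ Finset.Icc 1 p,
        ∑ i ∈ Finset.Icc 1 k, A a i ≤ ∑ i ∈ Finset.Icc 1 k, A (a+1) i) ∧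
      (∃ i ∈ Finset.Icc 1 p, A a i ≠ A (a+1) i)) :
    q ≤ t * (p - t) + 1 := by
  rcases Nat.lt_or_ge q 1 with hq0 | hq1
  · omega
  have h1q : (1 : ℕ) ∈ Finset.Icc 1 q := by simp [hq1]
  have htp : t ≤ p := by
    calc t = ∑ i ∈ Finset.Icc 1 p, A 1 i := (hsum 1 h1q).symm
      _ ≤ ∑ i ∈ Finset.Icc 1 p, 1 := Finset.sum_le_sum (h01 1 h1q)
      _ = p := by simp
  set S : ℕ → ℕ → ℕ := fun a k => ∑ i ∈ Finset.Icc 1 k, A a i with hSdef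
  -- upper bound
  have hub : ∀ a ∈ Finset.Icc 1 q, ∀ k ∈ Finset.Icc 1 p, S a k ≤ min k t := by
    intro a ha k hk
    simp only [Finset.mem_Icc] at hk
    refine le_min ?_ ?_
    · calc S a k ≤ ∑ i ∈ Finset.Icc 1 k, 1 := by
            refine Finset.sum_le_sum (fun i hi => ?_)
            refine h01 a ha i ?_
            simp only [Finset.mem_Icc] at hi ⊢
            omega
        _ = k := by simp
    · calc S a k ≤ S a p := by
            refine Finset.sum_le_sum_of_subset ?_
            exact Finset.Icc_subset_Icc_right hk.2
        _ = t := hsum a ha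
  -- lower bound
  have hlb : ∀ a ∈ Finset.Icc 1 q, ∀ k ∈ Finset.Icc 1 p, t - (p - k) ≤ S a k := by
    intro a ha k hk
    simp only [Finset.mem_Icc] at hk
    have hsplit : S a k + ∑ i ∈ Finset.Ioc k p, A a i = S a p := by
      have e1 : Finset.Icc 1 k = Finset.Ioc 0 k := by
        ext x; simp [Finset.mem_Icc, Finset.mem_Ioc]; omega
      have e2 : Finset.Icc 1 p = Finset.Ioc 0 p := by
        ext x; simp [Finset.mem_Icc, Finset.mem_Ioc]; omega
      simp only [hSdef, e1, e2]
      exact Finset.sum_Ioc_consecutive _ (Nat.zero_le k) hk.2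
    have htail : ∑ i ∈ Finset.Ioc k p, A a i ≤ p - k := by
      calc ∑ i ∈ Finset.Ioc k p, A a i ≤ ∑ i ∈ Finset.Ioc k p, 1 := by
            refine Finset.sum_le_sum (fun i hi => ?_)
            refine h01 a ha i ?_
            simp only [Finset.mem_Ioc] at hi
            simp only [Finset.mem_Icc]
            omega
        _ = p - k := by simp
    have hSp : S a p = t := hsum a ha
    omega
  set Φ : ℕ → ℕ := fun a => ∑ k ∈ Finset.Icc 1 p, S a k with hΦdef
  -- strict increase
  have hstep : ∀ a, 1 ≤ a → a < q → Φ a < Φ (a + 1) := by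
    intro a ha haq
    obtain ⟨hmono, i, hi, hne⟩ := hchain a ha haq
    have hex : ∃ k ∈ Finset.Icc 1 p, S a k < S (a + 1) k := by
      by_contra hcon
      push_neg at hcon
      have heq : ∀ k ∈ Finset.Icc 1 p, S a k = S (a + 1) k :=
        fun k hk => le_antisymm (hmono k hk) (hcon k hk)
      simp only [Finset.mem_Icc] at hi
      have hdec : ∀ b, S b i = S b (i - 1) + A b i := by
        intro b
        have hi1 : i - 1 + 1 = i := by omega
        rw [hSdef]
        simp only
        rw [← hi1, Finset.sum_Icc_succ_top (by omega : 1 ≤ i - 1 + 1), Nat.add_sub_cancel]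
      have hprev : S a (i - 1) = S (a + 1) (i - 1) := by
        rcases Nat.eq_or_lt_of_le hi.1 with h | h
        · have : i - 1 = 0 := by omega
          simp [hSdef, this]
        · exact heq (i - 1) (by simp only [Finset.mem_Icc]; omega)
      have hmain := heq i (by simp only [Finset.mem_Icc]; omega)
      rw [hdec a, hdec (a + 1), hprev] at hmain
      omega
    obtain ⟨k, hk, hlt⟩ := hex
    exact Finset.sum_lt_sum (fun k hk => hmono k hk) ⟨k, hk, hlt⟩
  -- Φ 1 + (b - 1) ≤ Φ b
  have hΦmono : ∀ b, 1 ≤ b → b ≤ q → Φ 1 + (b - 1) ≤ Φ b := by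
    intro b hb
    induction b, hb using Nat.le_induction with
    | base => intro _; simp
    | succ b hb ih =>
        intro hbq
        have h1 := ih (by omega)
        have h2 := hstep b hb (by omega)
        omega
  have hU : Φ q ≤ ∑ k ∈ Finset.Icc 1 p, min k t :=
    Finset.sum_le_sum (hub q (by simp [hq1]))
  have hL : (∑ k ∈ Finset.Icc 1 p, (t - (p - k))) ≤ Φ 1 :=
    Finset.sum_le_sum (hlb 1 h1q)
  have hkey : ∑ k ∈ Finset.Icc 1 p, min k t
      = (∑ k ∈ Finset.Icc 1 p, (t - (p - k))) + t * (p - t) := by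
    rw [← Finset.Ico_add_one_right_eq_Icc, Finset.sum_Ico_eq_sum_range, Finset.sum_Ico_eq_sum_range]
    simp only [Nat.add_sub_cancel, Nat.succ_sub_one]
    exact key_sum_aux t p htp
  have hfin := hΦmono q hq1 le_rfl
  omega
end

section
/- If a p×p 0-1 matrix T realizes row sums x and column sums y, then τ_{kl} ≥ 0 for all 0 ≤ k,l ≤ p, where τ_{kl} = (p−k)(p−l) + Σ_{j=1}^l y_j − Σ_{i=k+1}^p x_i. -/
/-! The ones of `T` in rows `k+1, …, p` lie either in columns `1, …, l`, where there are at most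
`∑_{j ≤ l} y_j` of them, or in the `(p - k) × (p - l)` block of the remaining columns. -/

open Finset

theorem sum_rows_le_sum_cols_add_card_mul {ι κ : Type*} [DecidableEq κ] (T : ι → κ → ℕ)
    {R A : Finset ι} {C B : Finset κ} (hRA : R ⊆ A) (hCB : C ⊆ B)
    (hT : ∀ i ∈ R, ∀ j ∈ B \ C, T i j ≤ 1) :
    ∑ i ∈ R, ∑ j ∈ B, T i j ≤ ∑ j ∈ C, ∑ i ∈ A, T i j + #R * #(B \ C) := by
  have hC : ∑ i ∈ R, ∑ j ∈ C, T i j ≤ ∑ j ∈ C, ∑ i ∈ A, T i j := by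
    rw [sum_comm]
    exact sum_le_sum fun j _ => sum_le_sum_of_subset hRA
  have hBC : ∑ i ∈ R, ∑ j ∈ B \ C, T i j ≤ #R * #(B \ C) := by
    calc ∑ i ∈ R, ∑ j ∈ B \ C, T i j ≤ ∑ _i ∈ R, #(B \ C) :=
          sum_le_sum fun i hi => by simpa using sum_le_card_nsmul _ _ 1 (hT i hi)
      _ = #R * #(B \ C) := by rw [sum_const, smul_eq_mul]
  calc ∑ i ∈ R, ∑ j ∈ B, T i j = ∑ i ∈ R, ∑ j ∈ B \ C, T i j + ∑ i ∈ R, ∑ j ∈ C, T i j := by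
        rw [← sum_add_distrib]
        exact sum_congr rfl fun i _ => (sum_sdiff hCB).symm
    _ ≤ ∑ j ∈ C, ∑ i ∈ A, T i j + #R * #(B \ C) := by omega

/-- If a p×p 0-1 matrix T realizes row sums x and column sums y,
then τ_{kl} ≥ 0 for all 0 ≤ k,l ≤ p. -/
theorem stmt_7 (p : ℕ) (T : ℕ → ℕ → ℕ) (x y : ℕ → ℕ)
    (h01 : ∀ i ∈ Finset.Icc 1 p, ∀ j ∈ Finset.Icc 1 p, T i j ≤ 1)
    (hrow : ∀ i ∈ Finset.Icc 1 p, ∑ j ∈ Finset.Icc 1 p, T i j = x i)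
    (hcol : ∀ j ∈ Finset.Icc 1 p, ∑ i ∈ Finset.Icc 1 p, T i j = y j)
    (k l : ℕ) (hk : k ≤ p) (hl : l ≤ p) :
    0 ≤ ((p : ℤ) - k) * ((p : ℤ) - l)
      + ∑ j ∈ Finset.Icc 1 l, (y j : ℤ)
      - ∑ i ∈ Finset.Icc (k+1) p, (x i : ℤ) := by
  have hrows : Icc (k + 1) p ⊆ Icc 1 p := Icc_subset_Icc (by omega) le_rfl
  have hcols : Icc 1 l ⊆ Icc 1 p := Icc_subset_Icc le_rfl hl
  have key := sum_rows_le_sum_cols_add_card_mul T hrows hcols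
    fun i hi j hj => h01 i (hrows hi) j (sdiff_subset hj)
  rw [sum_congr rfl fun i hi => hrow i (hrows hi), sum_congr rfl fun j hj => hcol j (hcols hj),
    card_sdiff_of_subset hcols, Nat.card_Icc, Nat.card_Icc, Nat.card_Icc,
    Nat.add_sub_add_right, Nat.add_sub_cancel, Nat.add_sub_cancel] at key
  have hx : ∑ i ∈ Icc (k + 1) p, (x i : ℤ) ≤ ∑ j ∈ Icc 1 l, (y j : ℤ) + (p - k) * (p - l) := by
    exact_mod_cast key
  linarith
end

section
/- Let T be a p×p 0-1 matrix realizing row sums x and column sums y, and 0 ≤ k,l ≤ p. Then τ_{kl} = 0 if and only if T is (k,l)-decomposed, i.e., the top-left k×l submatrix of T contains only 0's and the bottom-right (p−k)×(p−l) submatrix contains only 1's. -/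
open Finset

/-!
Splitting the rows at `k` and the columns at `l`, the column sums over `j ≤ l` count the ones in
the two left blocks and the row sums over `i > k` those in the two bottom blocks; the bottom-left
block cancels and `τ_{kl}` is the number of ones in the top-left block plus the number of zeros in
the bottom-right block. Both counts are nonnegative, so `τ_{kl} = 0` exactly when both vanish.
-/

theorem Nat.sum_Icc_one_add_sum_Icc_succ {M : Type*} [AddCommMonoid M] (f : ℕ → M) {a b : ℕ}
    (hab : a ≤ b) :
    ∑ i ∈ Icc 1 a, f i + ∑ i ∈ Icc (a + 1) b, f i = ∑ i ∈ Icc 1 b, f i := by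
  simpa only [← Icc_add_one_left_eq_Ioc, zero_add] using sum_Ioc_consecutive f (Nat.zero_le a) hab

theorem Finset.sum_sum_eq_zero_iff_of_nonneg {ι κ M : Type*} [AddCommMonoid M] [PartialOrder M]
    [IsOrderedAddMonoid M] {s : Finset ι} {t : Finset κ} {f : ι → κ → M}
    (hf : ∀ i ∈ s, ∀ j ∈ t, 0 ≤ f i j) :
    ∑ i ∈ s, ∑ j ∈ t, f i j = 0 ↔ ∀ i ∈ s, ∀ j ∈ t, f i j = 0 := by
  rw [sum_eq_zero_iff_of_nonneg fun i hi ↦ sum_nonneg (hf i hi)]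
  exact forall₂_congr fun i hi ↦ sum_eq_zero_iff_of_nonneg (hf i hi)

theorem tau_eq_ones_add_zeros (p : ℕ) (T : ℕ → ℕ → ℕ) (x y : ℕ → ℕ)
    (hrow : ∀ i ∈ Icc 1 p, ∑ j ∈ Icc 1 p, T i j = x i)
    (hcol : ∀ j ∈ Icc 1 p, ∑ i ∈ Icc 1 p, T i j = y j)
    {k l : ℕ} (hk : k ≤ p) (hl : l ≤ p) :
    ((p : ℤ) - k) * ((p : ℤ) - l) + ∑ j ∈ Icc 1 l, (y j : ℤ) - ∑ i ∈ Icc (k + 1) p, (x i : ℤ) =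
      ∑ i ∈ Icc 1 k, ∑ j ∈ Icc 1 l, (T i j : ℤ) +
        ∑ i ∈ Icc (k + 1) p, ∑ j ∈ Icc (l + 1) p, (1 - (T i j : ℤ)) := by
  have hcols : ∑ j ∈ Icc 1 l, (y j : ℤ) =
      ∑ i ∈ Icc 1 k, ∑ j ∈ Icc 1 l, (T i j : ℤ) + ∑ i ∈ Icc (k + 1) p, ∑ j ∈ Icc 1 l, (T i j : ℤ) := by
    rw [Nat.sum_Icc_one_add_sum_Icc_succ _ hk, sum_comm]
    refine sum_congr rfl fun j hj ↦ ?_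
    exact_mod_cast (hcol j (Icc_subset_Icc_right hl hj)).symm
  have hrows : ∑ i ∈ Icc (k + 1) p, (x i : ℤ) =
      ∑ i ∈ Icc (k + 1) p, ∑ j ∈ Icc 1 l, (T i j : ℤ) +
        ∑ i ∈ Icc (k + 1) p, ∑ j ∈ Icc (l + 1) p, (T i j : ℤ) := by
    rw [← sum_add_distrib]
    refine sum_congr rfl fun i hi ↦ ?_
    rw [Nat.sum_Icc_one_add_sum_Icc_succ _ hl]
    exact_mod_cast (hrow i (Icc_subset_Icc_left (by omega) hi)).symm
  have hcard : ((p : ℤ) - k) * ((p : ℤ) - l) = ∑ i ∈ Icc (k + 1) p, ∑ j ∈ Icc (l + 1) p, (1 : ℤ) := by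
    simp only [sum_const, Nat.card_Icc, nsmul_eq_mul, mul_one, Nat.add_sub_add_right]
    push_cast [hk, hl]
    ring
  simp only [sum_sub_distrib, hcols, hrows, hcard]
  ring

/-- Let T be a p×p 0-1 matrix realizing row sums x and column
sums y, and 0 ≤ k,l ≤ p. Then τ_{kl} = 0 iff T is (k,l)-decomposed: the
top-left k×l submatrix contains only 0's and the bottom-right (p−k)×(p−l)
submatrix contains only 1's. -/
theorem stmt_8 (p : ℕ) (T : ℕ → ℕ → ℕ) (x y : ℕ → ℕ)
    (h01 : ∀ i ∈ Finset.Icc 1 p, ∀ j ∈ Finset.Icc 1 p, T i j ≤ 1)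
    (hrow : ∀ i ∈ Finset.Icc 1 p, ∑ j ∈ Finset.Icc 1 p, T i j = x i)
    (hcol : ∀ j ∈ Finset.Icc 1 p, ∑ i ∈ Finset.Icc 1 p, T i j = y j)
    (k l : ℕ) (hk : k ≤ p) (hl : l ≤ p) :
    (((p : ℤ) - k) * ((p : ℤ) - l)
      + ∑ j ∈ Finset.Icc 1 l, (y j : ℤ)
      - ∑ i ∈ Finset.Icc (k+1) p, (x i : ℤ) = 0) ↔
    ((∀ i ∈ Finset.Icc 1 k, ∀ j ∈ Finset.Icc 1 l, T i j = 0) ∧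
     (∀ i ∈ Finset.Icc (k+1) p, ∀ j ∈ Finset.Icc (l+1) p, T i j = 1)) := by
  have hzeros_nonneg : ∀ i ∈ Icc (k + 1) p, ∀ j ∈ Icc (l + 1) p, 0 ≤ 1 - (T i j : ℤ) :=
    fun i hi j hj ↦ by
      have := h01 i (Icc_subset_Icc_left (by omega) hi) j (Icc_subset_Icc_left (by omega) hj)
      omega
  rw [tau_eq_ones_add_zeros p T x y hrow hcol hk hl,
    add_eq_zero_iff_of_nonneg (sum_nonneg fun i _ ↦ sum_nonneg fun j _ ↦ Int.natCast_nonneg _)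
      (sum_nonneg fun i hi ↦ sum_nonneg (hzeros_nonneg i hi)),
    sum_sum_eq_zero_iff_of_nonneg (fun i _ j _ ↦ Int.natCast_nonneg _),
    sum_sum_eq_zero_iff_of_nonneg hzeros_nonneg]
  simp only [Nat.cast_eq_zero, sub_eq_zero, eq_comm (a := (1 : ℤ)), Nat.cast_eq_one]
end

section
/- If some realization T of row and column sums (x,y) is (k,l)-decomposed, then every realization of (x,y) is (k,l)-decomposed. -/
/-!
Split the rows into a top part `s` and a bottom part `t`, and the columns into a left part `u`
and a right part `v`. The sum of the top row sums and the sum of the right column sums both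
count the top-right block once, so for every matrix
  (sum of the top row sums) + (bottom-right block) = (top-left block) + (sum of the right column sums).
The row and column sums are the same for all realizations, so `top-left − bottom-right` is an
invariant. It equals `−|t||v|` for a decomposed realization, its least possible value for a 0-1
matrix, and this forces the top-left block of every realization to vanish and its bottom-right
block to be full.
-/

open Finset

section Blocks

variable {ι κ : Type*} [DecidableEq ι] [DecidableEq κ]

theorem sum_rows_add_sum_block_eq {M : Type*} [AddCommMonoid M] (A : ι → κ → M)
    {s t : Finset ι} {u v : Finset κ} (hst : Disjoint s t) (huv : Disjoint u v) :
    ∑ i ∈ s, ∑ j ∈ u ∪ v, A i j + ∑ i ∈ t, ∑ j ∈ v, A i j =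
      ∑ i ∈ s, ∑ j ∈ u, A i j + ∑ j ∈ v, ∑ i ∈ s ∪ t, A i j := by
  simp only [sum_union huv, sum_union hst, sum_add_distrib, sum_comm (s := v)]
  abel

def IsBlockDecomposed (A : ι → κ → ℕ) (s t : Finset ι) (u v : Finset κ) : Prop :=
  (∀ i ∈ s, ∀ j ∈ u, A i j = 0) ∧ (∀ i ∈ t, ∀ j ∈ v, A i j = 1)

theorem IsBlockDecomposed.of_sums_eq {A B : ι → κ → ℕ}
    {s t : Finset ι} {u v : Finset κ} (hst : Disjoint s t) (huv : Disjoint u v)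
    (hA : IsBlockDecomposed A s t u v)
    (hrow : ∀ i ∈ s, ∑ j ∈ u ∪ v, A i j = ∑ j ∈ u ∪ v, B i j)
    (hcol : ∀ j ∈ v, ∑ i ∈ s ∪ t, A i j = ∑ i ∈ s ∪ t, B i j)
    (hB01 : ∀ i ∈ t, ∀ j ∈ v, B i j ≤ 1) :
    IsBlockDecomposed B s t u v := by
  obtain ⟨hA0, hA1⟩ := hA
  have hA_sums := sum_rows_add_sum_block_eq A hst huv
  have hB_sums := sum_rows_add_sum_block_eq B hst huv
  rw [sum_congr rfl hrow, sum_congr rfl hcol, sum_congr rfl fun i hi => sum_eq_zero (hA0 i hi),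
    sum_congr rfl fun i hi => sum_congr rfl (hA1 i hi), sum_const_zero] at hA_sums
  have hB_le : ∀ i ∈ t, ∑ j ∈ v, B i j ≤ ∑ j ∈ v, 1 := fun i hi => sum_le_sum (hB01 i hi)
  have hB_corner : ∑ i ∈ t, ∑ j ∈ v, B i j ≤ ∑ i ∈ t, ∑ j ∈ v, 1 := sum_le_sum hB_le
  have hB_zero : ∑ i ∈ s, ∑ j ∈ u, B i j = 0 := by omega
  have hB_full : ∑ i ∈ t, ∑ j ∈ v, B i j = ∑ i ∈ t, ∑ j ∈ v, 1 := by omega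
  refine ⟨fun i hi j hj => ?_, fun i hi j hj => ?_⟩
  · exact sum_eq_zero_iff.mp (sum_eq_zero_iff.mp hB_zero i hi) j hj
  · exact (sum_eq_sum_iff_of_le (hB01 i hi)).mp
      ((sum_eq_sum_iff_of_le hB_le).mp hB_full i hi) j hj

end Blocks

theorem Icc_one_union_Icc_succ {k p : ℕ} (hk : k ≤ p) : Icc 1 k ∪ Icc (k + 1) p = Icc 1 p := by
  ext i
  simp only [mem_union, mem_Icc]
  omega

theorem disjoint_Icc_one_Icc_succ (k p : ℕ) : Disjoint (Icc 1 k) (Icc (k + 1) p) := by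
  simp only [disjoint_left, mem_Icc]
  omega

theorem stmt_9_general (p : ℕ) (T T' : ℕ → ℕ → ℕ) (x y : ℕ → ℕ)
    (hrow : ∀ i ∈ Finset.Icc 1 p, ∑ j ∈ Finset.Icc 1 p, T i j = x i)
    (hcol : ∀ j ∈ Finset.Icc 1 p, ∑ i ∈ Finset.Icc 1 p, T i j = y j)
    (h01' : ∀ i ∈ Finset.Icc 1 p, ∀ j ∈ Finset.Icc 1 p, T' i j ≤ 1)
    (hrow' : ∀ i ∈ Finset.Icc 1 p, ∑ j ∈ Finset.Icc 1 p, T' i j = x i)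
    (hcol' : ∀ j ∈ Finset.Icc 1 p, ∑ i ∈ Finset.Icc 1 p, T' i j = y j)
    (k l : ℕ) (hk : k ≤ p) (hl : l ≤ p)
    (hdec : (∀ i ∈ Finset.Icc 1 k, ∀ j ∈ Finset.Icc 1 l, T i j = 0) ∧
      (∀ i ∈ Finset.Icc (k+1) p, ∀ j ∈ Finset.Icc (l+1) p, T i j = 1)) :
    (∀ i ∈ Finset.Icc 1 k, ∀ j ∈ Finset.Icc 1 l, T' i j = 0) ∧
      (∀ i ∈ Finset.Icc (k+1) p, ∀ j ∈ Finset.Icc (l+1) p, T' i j = 1) := by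
  have hrows := Icc_one_union_Icc_succ hk
  have hcols := Icc_one_union_Icc_succ hl
  refine IsBlockDecomposed.of_sums_eq (disjoint_Icc_one_Icc_succ k p)
    (disjoint_Icc_one_Icc_succ l p) hdec (fun i hi => ?_) (fun j hj => ?_) (fun i hi j hj => ?_)
  · have hi : i ∈ Icc 1 p := hrows ▸ mem_union_left _ hi
    rw [hcols, hrow i hi, hrow' i hi]
  · have hj : j ∈ Icc 1 p := hcols ▸ mem_union_right _ hj
    rw [hrows, hcol j hj, hcol' j hj]
  · exact h01' i (hrows ▸ mem_union_right _ hi) j (hcols ▸ mem_union_right _ hj)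

/-- If some realization T of row and column sums (x,y) is
(k,l)-decomposed, then every realization T' of (x,y) is (k,l)-decomposed. -/
theorem stmt_9 (p : ℕ) (T T' : ℕ → ℕ → ℕ) (x y : ℕ → ℕ)
    (h01 : ∀ i ∈ Finset.Icc 1 p, ∀ j ∈ Finset.Icc 1 p, T i j ≤ 1)
    (hrow : ∀ i ∈ Finset.Icc 1 p, ∑ j ∈ Finset.Icc 1 p, T i j = x i)
    (hcol : ∀ j ∈ Finset.Icc 1 p, ∑ i ∈ Finset.Icc 1 p, T i j = y j)
    (h01' : ∀ i ∈ Finset.Icc 1 p, ∀ j ∈ Finset.Icc 1 p, T' i j ≤ 1)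
    (hrow' : ∀ i ∈ Finset.Icc 1 p, ∑ j ∈ Finset.Icc 1 p, T' i j = x i)
    (hcol' : ∀ j ∈ Finset.Icc 1 p, ∑ i ∈ Finset.Icc 1 p, T' i j = y j)
    (k l : ℕ) (hk : k ≤ p) (hl : l ≤ p)
    (hdec : (∀ i ∈ Finset.Icc 1 k, ∀ j ∈ Finset.Icc 1 l, T i j = 0) ∧
      (∀ i ∈ Finset.Icc (k+1) p, ∀ j ∈ Finset.Icc (l+1) p, T i j = 1)) :
    (∀ i ∈ Finset.Icc 1 k, ∀ j ∈ Finset.Icc 1 l, T' i j = 0) ∧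
      (∀ i ∈ Finset.Icc (k+1) p, ∀ j ∈ Finset.Icc (l+1) p, T' i j = 1) :=
  stmt_9_general p T T' x y hrow hcol h01' hrow' hcol' k l hk hl hdec
end

section
/- If σ is a 0-1 vector of length p and the perfect mirror PM_σ realizes row/column sums (x,y), then PM_σ is the unique 0-1 matrix realizing (x,y). -/
open Finset

/-- Weight-suffix identity: `∑ j ∈ [1,p], j * c j = ∑ k ∈ [1,p], ∑ j ∈ [k,p], c j`. -/
private lemma weight_suffix (p : ℕ) (c : ℕ → ℕ) :
    ∑ k ∈ Icc 1 p, ∑ j ∈ Icc k p, c j = ∑ j ∈ Icc 1 p, j * c j := by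
  have h1 : ∀ k ∈ Icc 1 p, ∑ j ∈ Icc k p, c j
      = ∑ j ∈ Icc 1 p, if k ≤ j then c j else 0 := by
    intro k hk
    rw [← Finset.sum_filter]
    congr 1
    ext j
    simp only [mem_filter, mem_Icc]
    simp only [mem_Icc] at hk
    omega
  calc ∑ k ∈ Icc 1 p, ∑ j ∈ Icc k p, c j
      = ∑ k ∈ Icc 1 p, ∑ j ∈ Icc 1 p, if k ≤ j then c j else 0 :=
        Finset.sum_congr rfl h1
    _ = ∑ j ∈ Icc 1 p, ∑ k ∈ Icc 1 p, if k ≤ j then c j else 0 := Finset.sum_comm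
    _ = ∑ j ∈ Icc 1 p, j * c j := by
        refine Finset.sum_congr rfl fun j hj => ?_
        rw [← Finset.sum_filter]
        have hfil : (Icc 1 p).filter (fun k => k ≤ j) = Icc 1 j := by
          ext k
          simp only [mem_filter, mem_Icc]
          simp only [mem_Icc] at hj
          omega
        rw [hfil, Finset.sum_const, Nat.card_Icc, smul_eq_mul]
        simp only [Nat.add_sub_cancel]

/-- If σ is a 0-1 vector of length p and the perfect mirror
PM_σ realizes row/column sums (x,y), then PM_σ is the unique 0-1 matrix
realizing (x,y). -/
theorem stmt_12 (p : ℕ) (σ : ℕ → ℕ)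
    (hσ : ∀ i ∈ Finset.Icc 1 p, σ i ≤ 1) (x y : ℕ → ℕ)
    (PM : ℕ → ℕ → ℕ)
    (hPM : ∀ i j, PM i j = if i + j ≤ p then 0
      else if i + j = p + 1 then σ i else 1)
    (hrow : ∀ i ∈ Finset.Icc 1 p, ∑ j ∈ Finset.Icc 1 p, PM i j = x i)
    (hcol : ∀ j ∈ Finset.Icc 1 p, ∑ i ∈ Finset.Icc 1 p, PM i j = y j) :
    ∀ T : ℕ → ℕ → ℕ,
      (∀ i ∈ Finset.Icc 1 p, ∀ j ∈ Finset.Icc 1 p, T i j ≤ 1) →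
      (∀ i ∈ Finset.Icc 1 p, ∑ j ∈ Finset.Icc 1 p, T i j = x i) →
      (∀ j ∈ Finset.Icc 1 p, ∑ i ∈ Finset.Icc 1 p, T i j = y j) →
      ∀ i ∈ Finset.Icc 1 p, ∀ j ∈ Finset.Icc 1 p, T i j = PM i j := by
  intro T hT hTx hTy i hi j hj
  -- the "threshold" of row i : PM i j = 1 iff j > t i
  set t : ℕ → ℕ := fun i => p + 1 - i - σ i with ht
  have hPMval : ∀ i' ∈ Icc 1 p, ∀ l ∈ Icc 1 p, PM i' l = if t i' < l then 1 else 0 := by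
    intro i' hi' l hl
    simp only [mem_Icc] at hi' hl
    have hσi := hσ i' (by simp only [mem_Icc]; omega)
    rw [hPM]
    simp only [ht]
    split_ifs <;> omega
  -- suffix sums of a PM row
  have hSPM : ∀ i' ∈ Icc 1 p, ∀ k ∈ Icc 1 p,
      ∑ l ∈ Icc k p, PM i' l = p + 1 - max k (t i' + 1) := by
    intro i' hi' k hk
    simp only [mem_Icc] at hk
    have hcg : ∀ l ∈ Icc k p, PM i' l = if t i' < l then 1 else 0 := by
      intro l hl
      simp only [mem_Icc] at hl
      exact hPMval i' hi' l (by simp only [mem_Icc]; omega)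
    rw [Finset.sum_congr rfl hcg, ← Finset.sum_filter]
    have hfil : (Icc k p).filter (fun l => t i' < l) = Icc (max k (t i' + 1)) p := by
      ext l
      simp only [mem_filter, mem_Icc]
      omega
    rw [hfil, Finset.sum_const, Nat.card_Icc, smul_eq_mul, mul_one]
  -- suffix sums of T rows are bounded by those of PM rows
  have hSTle : ∀ i' ∈ Icc 1 p, ∀ k ∈ Icc 1 p,
      ∑ l ∈ Icc k p, T i' l ≤ ∑ l ∈ Icc k p, PM i' l := by
    intro i' hi' k hk
    simp only [mem_Icc] at hk
    have h1 : ∑ l ∈ Icc k p, T i' l ≤ (Icc k p).card • 1 :=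
      Finset.sum_le_card_nsmul _ _ 1
        (fun l hl => hT i' hi' l (by simp only [mem_Icc] at hl ⊢; omega))
    rw [Nat.card_Icc, smul_eq_mul, mul_one] at h1
    have h2 : ∑ l ∈ Icc k p, T i' l ≤ ∑ l ∈ Icc 1 p, T i' l :=
      Finset.sum_le_sum_of_subset (Finset.Icc_subset_Icc (by omega) le_rfl)
    have h3 := hTx i' hi'
    have h4 := hrow i' hi'
    have h5 := hSPM i' hi' 1 (by simp only [mem_Icc]; omega)
    rw [hSPM i' hi' k (by simp only [mem_Icc]; omega)]
    omega
  -- total weights agree (fixed by the column sums)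
  have htot : ∑ i' ∈ Icc 1 p, ∑ k ∈ Icc 1 p, ∑ l ∈ Icc k p, T i' l
      = ∑ i' ∈ Icc 1 p, ∑ k ∈ Icc 1 p, ∑ l ∈ Icc k p, PM i' l := by
    have key : ∀ (c : ℕ → ℕ → ℕ), (∀ l ∈ Icc 1 p, ∑ i' ∈ Icc 1 p, c i' l = y l) →
        ∑ i' ∈ Icc 1 p, ∑ k ∈ Icc 1 p, ∑ l ∈ Icc k p, c i' l
          = ∑ l ∈ Icc 1 p, l * y l := by
      intro c hc
      calc ∑ i' ∈ Icc 1 p, ∑ k ∈ Icc 1 p, ∑ l ∈ Icc k p, c i' l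
          = ∑ i' ∈ Icc 1 p, ∑ l ∈ Icc 1 p, l * c i' l :=
            Finset.sum_congr rfl (fun i' _ => weight_suffix p (c i'))
        _ = ∑ l ∈ Icc 1 p, ∑ i' ∈ Icc 1 p, l * c i' l := Finset.sum_comm
        _ = ∑ l ∈ Icc 1 p, l * y l := by
            refine Finset.sum_congr rfl fun l hl => ?_
            rw [← Finset.mul_sum, hc l hl]
    rw [key T hTy, key PM hcol]
  -- hence all suffix sums agree
  have hrows : ∀ i' ∈ Icc 1 p,
      ∑ k ∈ Icc 1 p, ∑ l ∈ Icc k p, T i' l = ∑ k ∈ Icc 1 p, ∑ l ∈ Icc k p, PM i' l :=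
    (Finset.sum_eq_sum_iff_of_le
      (fun i' hi' => Finset.sum_le_sum (fun k hk => hSTle i' hi' k hk))).mp htot
  have hS : ∀ i' ∈ Icc 1 p, ∀ k ∈ Icc 1 p,
      ∑ l ∈ Icc k p, T i' l = ∑ l ∈ Icc k p, PM i' l := fun i' hi' =>
    (Finset.sum_eq_sum_iff_of_le (fun k hk => hSTle i' hi' k hk)).mp (hrows i' hi')
  -- conclude entrywise
  simp only [mem_Icc] at hj
  have hsplit : ∀ (c : ℕ → ℕ), c j + ∑ l ∈ Icc (j + 1) p, c l = ∑ l ∈ Icc j p, c l := by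
    intro c
    have hins : Icc j p = insert j (Icc (j + 1) p) := by
      ext l
      simp only [mem_insert, mem_Icc]
      omega
    rw [hins, Finset.sum_insert (by simp only [mem_Icc]; omega)]
  have h1 := hsplit (T i)
  have h2 := hsplit (PM i)
  have h3 := hS i hi j (by simp only [mem_Icc]; omega)
  have hnext : ∑ l ∈ Icc (j + 1) p, T i l = ∑ l ∈ Icc (j + 1) p, PM i l := by
    rcases Nat.lt_or_ge j p with h | h
    · exact hS i hi (j + 1) (by simp only [mem_Icc]; omega)
    · rw [Finset.Icc_eq_empty (by omega), Finset.sum_empty, Finset.sum_empty]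
  omega
end

section
/- Let α, β be 0-1 vectors of length p and define x_i = i − α_i, y_i = i − β_i. Then x and y are consistent (some p×p 0-1 matrix has row sums x and column sums y) if and only if Σα^R = Σβ and α^R ⪰ β. -/
open Finset

lemma sum_reindex14 (p k : ℕ) (α : ℕ → ℕ) (hk : k ≤ p) :
    ∑ i ∈ Icc 1 k, α (p - i + 1) = ∑ i ∈ Icc (p - k + 1) p, α i := by
  apply Finset.sum_nbij' (fun i => p - i + 1) (fun j => p - j + 1) <;>
    intros a ha <;> simp only [mem_Icc] at * <;> first | omega | (congr 1; omega)

lemma ex_uniq14 (p : ℕ) (γ : ℕ → ℕ) (hγ : ∀ i ∈ Icc 1 p, γ i ≤ 1)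
    (t : ℕ) (ht1 : 1 ≤ t) (htp : t ≤ ∑ i ∈ Icc 1 p, γ i) :
    ∃! j, j ∈ Icc 1 p ∧ γ j = 1 ∧ ∑ i ∈ Icc 1 j, γ i = t := by
  classical
  have hex : ∃ n, t ≤ ∑ i ∈ Icc 1 n, γ i := ⟨p, htp⟩
  set j := Nat.find hex with hjdef
  have hj : t ≤ ∑ i ∈ Icc 1 j, γ i := Nat.find_spec hex
  have hjle : j ≤ p := Nat.find_min' hex htp
  have hj0 : j ≠ 0 := by
    intro h
    rw [h] at hj; simp at hj; omega
  have hprev : ¬ t ≤ ∑ i ∈ Icc 1 (j - 1), γ i := Nat.find_min hex (by omega)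
  have hsplit : ∑ i ∈ Icc 1 j, γ i = ∑ i ∈ Icc 1 (j - 1), γ i + γ j := by
    have h := Finset.sum_Icc_succ_top (f := γ) (show 1 ≤ (j - 1) + 1 by omega)
    rw [show (j - 1) + 1 = j from by omega] at h
    exact h
  have hγj : γ j ≤ 1 := hγ j (by simp [mem_Icc]; omega)
  refine ⟨j, ⟨by simp [mem_Icc]; omega, by omega, by omega⟩, ?_⟩
  rintro j' ⟨hj'mem, hγj', hsum'⟩
  simp only [mem_Icc] at hj'mem
  by_contra hne
  rcases lt_or_gt_of_ne hne with h | h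
  · -- j' < j
    have hsub : insert j (Icc 1 j') ⊆ Icc 1 j := by
      intro a ha; simp [mem_Icc] at *; omega
    have := Finset.sum_le_sum_of_subset hsub (f := γ)
    rw [Finset.sum_insert (by simp [mem_Icc]; omega)] at this
    omega
  · have hsub : insert j' (Icc 1 j) ⊆ Icc 1 j' := by
      intro a ha; simp [mem_Icc] at *; omega
    have := Finset.sum_le_sum_of_subset hsub (f := γ)
    rw [Finset.sum_insert (by simp [mem_Icc]; omega)] at this
    omega

lemma key14 (p : ℕ) (α β : ℕ → ℕ) (i j : ℕ) (hi : i ∈ Icc 1 p) (hj : j ∈ Icc 1 p)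
    (hαi : α i = 1) (hβj : β j = 1)
    (heq : ∑ k ∈ Icc 1 (p - i + 1), α (p - k + 1) = ∑ k ∈ Icc 1 j, β k)
    (hdom : ∀ k ∈ Icc 1 p, ∑ l ∈ Icc 1 k, β l ≤ ∑ l ∈ Icc 1 k, α (p - l + 1)) :
    p + 1 ≤ i + j := by
  simp only [mem_Icc] at hi hj
  by_contra hlt
  have hjpi : j ≤ p - i := by omega
  have h1 : ∑ l ∈ Icc 1 j, β l ≤ ∑ l ∈ Icc 1 j, α (p - l + 1) := hdom j (by simp [mem_Icc]; omega)
  have h2 : ∑ l ∈ Icc 1 j, α (p - l + 1) ≤ ∑ l ∈ Icc 1 (p - i), α (p - l + 1) :=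
    Finset.sum_le_sum_of_subset (by intro a ha; simp [mem_Icc] at *; omega)
  have h3 : ∑ k ∈ Icc 1 (p - i + 1), α (p - k + 1)
      = ∑ k ∈ Icc 1 (p - i), α (p - k + 1) + α (p - (p - i + 1) + 1) := by
    rw [Finset.sum_Icc_succ_top (by omega)]
  have h4 : p - (p - i + 1) + 1 = i := by omega
  rw [h4, hαi] at h3
  omega

section
variable (p : ℕ) (α β : ℕ → ℕ)

-- matched-pair predicate
def M14 (i j : ℕ) : Prop :=
  α i = 1 ∧ β j = 1 ∧ ∑ k ∈ Icc 1 (p - i + 1), α (p - k + 1) = ∑ k ∈ Icc 1 j, β k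

instance (i j : ℕ) : Decidable (M14 p α β i j) := by unfold M14; infer_instance

def T14 (i j : ℕ) : ℕ := if p + 1 ≤ i + j ∧ ¬ M14 p α β i j then 1 else 0

end

lemma filter_row14 (p : ℕ) (α β : ℕ → ℕ) (i : ℕ) (hi1 : 1 ≤ i) (hip : i ≤ p) :
    (Icc 1 p).filter (fun j => p + 1 ≤ i + j ∧ ¬ M14 p α β i j)
      = (Icc (p + 1 - i) p).filter (fun j => ¬ M14 p α β i j) := by
  ext j
  simp only [mem_filter, mem_Icc]
  constructor
  · rintro ⟨⟨h1, h2⟩, h3, h4⟩; exact ⟨⟨by omega, h2⟩, h4⟩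
  · rintro ⟨⟨h1, h2⟩, h4⟩; exact ⟨⟨by omega, h2⟩, by omega, h4⟩

lemma filter_col14 (p : ℕ) (α β : ℕ → ℕ) (j : ℕ) (hj1 : 1 ≤ j) (hjp : j ≤ p) :
    (Icc 1 p).filter (fun i => p + 1 ≤ i + j ∧ ¬ M14 p α β i j)
      = (Icc (p + 1 - j) p).filter (fun i => ¬ M14 p α β i j) := by
  ext i
  simp only [mem_filter, mem_Icc]
  constructor
  · rintro ⟨⟨h1, h2⟩, h3, h4⟩; exact ⟨⟨by omega, h2⟩, h4⟩
  · rintro ⟨⟨h1, h2⟩, h4⟩; exact ⟨⟨by omega, h2⟩, by omega, h4⟩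

example : True := trivial

lemma row14 (p : ℕ) (α β : ℕ → ℕ)
    (hα : ∀ i ∈ Icc 1 p, α i ≤ 1) (hβ : ∀ i ∈ Icc 1 p, β i ≤ 1)
    (htot : ∑ i ∈ Icc 1 p, α (p - i + 1) = ∑ i ∈ Icc 1 p, β i)
    (hdom : ∀ k ∈ Icc 1 p, ∑ l ∈ Icc 1 k, β l ≤ ∑ l ∈ Icc 1 k, α (p - l + 1))
    (i : ℕ) (hi : i ∈ Icc 1 p) :
    ∑ j ∈ Icc 1 p, T14 p α β i j = i - α i := by
  simp only [mem_Icc] at hi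
  obtain ⟨hi1, hip⟩ := hi
  unfold T14
  rw [Finset.sum_boole, Nat.cast_id]
  rw [filter_row14 p α β i hi1 hip]
  have hcard := Finset.card_filter_add_card_filter_not
    (s := Icc (p + 1 - i) p) (p := fun j => M14 p α β i j)
  have hIcard : (Icc (p + 1 - i) p).card = i := by rw [Nat.card_Icc]; omega
  have hMcard : ((Icc (p + 1 - i) p).filter (fun j => M14 p α β i j)).card = α i := by
    have hαi := hα i (by simp [mem_Icc]; omega)
    rcases Nat.le_one_iff_eq_zero_or_eq_one.mp hαi with h0 | h1
    · rw [h0]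
      rw [Finset.card_eq_zero, Finset.filter_eq_empty_iff]
      rintro j _ ⟨hc, _⟩; omega
    · rw [h1]
      -- t = A (p - i + 1)
      set t := ∑ k ∈ Icc 1 (p - i + 1), α (p - k + 1) with htdef
      have ht1 : 1 ≤ t := by
        have hmem : p - i + 1 ∈ Icc 1 (p - i + 1) := by simp [mem_Icc]
        have h2 := Finset.single_le_sum (f := fun k => α (p - k + 1))
          (fun k _ => Nat.zero_le _) hmem
        simp only [show p - (p - i + 1) + 1 = i from by omega, h1] at h2
        omega
      have htp : t ≤ ∑ l ∈ Icc 1 p, β l := by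
        have : t ≤ ∑ k ∈ Icc 1 p, α (p - k + 1) :=
          Finset.sum_le_sum_of_subset (by intro a ha; simp [mem_Icc] at *; omega)
        omega
      obtain ⟨j₀, ⟨hj₀mem, hβj₀, hbj₀⟩, huniq⟩ := ex_uniq14 p β hβ t ht1 htp
      have hM₀ : M14 p α β i j₀ := ⟨h1, hβj₀, hbj₀.symm⟩
      have hkey : p + 1 ≤ i + j₀ :=
        key14 p α β i j₀ (by simp [mem_Icc]; omega) hj₀mem h1 hβj₀ hbj₀.symm hdom
      simp only [mem_Icc] at hj₀mem
      have : (Icc (p + 1 - i) p).filter (fun j => M14 p α β i j) = {j₀} := by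
        apply Finset.eq_singleton_iff_unique_mem.mpr
        constructor
        · simp only [mem_filter, mem_Icc]; exact ⟨⟨by omega, by omega⟩, hM₀⟩
        · rintro j hj
          simp only [mem_filter, mem_Icc] at hj
          obtain ⟨⟨hja, hjb⟩, _, hβj, hbj⟩ := hj
          exact huniq j ⟨by simp [mem_Icc]; omega, hβj, hbj.symm⟩
      rw [this, Finset.card_singleton]
  omega

lemma col14 (p : ℕ) (α β : ℕ → ℕ)
    (hα : ∀ i ∈ Icc 1 p, α i ≤ 1) (hβ : ∀ i ∈ Icc 1 p, β i ≤ 1)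
    (htot : ∑ i ∈ Icc 1 p, α (p - i + 1) = ∑ i ∈ Icc 1 p, β i)
    (hdom : ∀ k ∈ Icc 1 p, ∑ l ∈ Icc 1 k, β l ≤ ∑ l ∈ Icc 1 k, α (p - l + 1))
    (j : ℕ) (hj : j ∈ Icc 1 p) :
    ∑ i ∈ Icc 1 p, T14 p α β i j = j - β j := by
  simp only [mem_Icc] at hj
  obtain ⟨hj1, hjp⟩ := hj
  unfold T14
  rw [Finset.sum_boole, Nat.cast_id]
  rw [filter_col14 p α β j hj1 hjp]
  have hcard := Finset.card_filter_add_card_filter_not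
    (s := Icc (p + 1 - j) p) (p := fun i => M14 p α β i j)
  have hIcard : (Icc (p + 1 - j) p).card = j := by rw [Nat.card_Icc]; omega
  have hMcard : ((Icc (p + 1 - j) p).filter (fun i => M14 p α β i j)).card = β j := by
    have hβj := hβ j (by simp [mem_Icc]; omega)
    rcases Nat.le_one_iff_eq_zero_or_eq_one.mp hβj with h0 | h1
    · rw [h0]
      rw [Finset.card_eq_zero, Finset.filter_eq_empty_iff]
      rintro i _ ⟨_, hc, _⟩; omega
    · rw [h1]
      set t := ∑ k ∈ Icc 1 j, β k with htdef
      have ht1 : 1 ≤ t := by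
        have hmem : j ∈ Icc 1 j := by simp [mem_Icc]; omega
        have h2 := Finset.single_le_sum (f := β) (fun k _ => Nat.zero_le _) hmem
        omega
      have htp : t ≤ ∑ k ∈ Icc 1 p, α (p - k + 1) := by
        have : t ≤ ∑ l ∈ Icc 1 p, β l :=
          Finset.sum_le_sum_of_subset (by intro a ha; simp [mem_Icc] at *; omega)
        omega
      have hγ : ∀ k ∈ Icc 1 p, α (p - k + 1) ≤ 1 := by
        intro k hk; simp only [mem_Icc] at hk
        exact hα _ (by simp [mem_Icc]; omega)
      obtain ⟨k₀, ⟨hk₀mem, hαk₀, hAk₀⟩, huniq⟩ :=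
        ex_uniq14 p (fun k => α (p - k + 1)) hγ t ht1 htp
      simp only [mem_Icc] at hk₀mem
      set i₀ := p - k₀ + 1 with hi₀def
      have hii : p - i₀ + 1 = k₀ := by omega
      have hαi₀ : α i₀ = 1 := hαk₀
      have hM₀ : M14 p α β i₀ j := by
        refine ⟨hαi₀, h1, ?_⟩
        rw [hii]; exact hAk₀
      have hkey : p + 1 ≤ i₀ + j :=
        key14 p α β i₀ j (by simp [mem_Icc]; omega) (by simp [mem_Icc]; omega)
          hαi₀ h1 (by rw [hii]; exact hAk₀) hdom
      have : (Icc (p + 1 - j) p).filter (fun i => M14 p α β i j) = {i₀} := by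
        apply Finset.eq_singleton_iff_unique_mem.mpr
        constructor
        · simp only [mem_filter, mem_Icc]; exact ⟨⟨by omega, by omega⟩, hM₀⟩
        · rintro i hi
          simp only [mem_filter, mem_Icc] at hi
          obtain ⟨⟨hia, hib⟩, hαi, _, hAi⟩ := hi
          have hi1 : 1 ≤ i := by omega
          have hγk : (fun k => α (p - k + 1)) (p - i + 1) = 1 := by
            simp only [show p - (p - i + 1) + 1 = i from by omega]; exact hαi
          have := huniq (p - i + 1) ⟨by simp [mem_Icc]; omega, hγk, hAi⟩
          omega
      rw [this, Finset.card_singleton]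
  omega

/-- Let α, β be 0-1 vectors of length p and x_i = i − α_i,
y_i = i − β_i. Then x, y are consistent iff Σα^R = Σβ and α^R ⪰ β. -/
theorem stmt_14 (p : ℕ) (α β : ℕ → ℕ)
    (hα : ∀ i ∈ Finset.Icc 1 p, α i ≤ 1)
    (hβ : ∀ i ∈ Finset.Icc 1 p, β i ≤ 1)
    (x y : ℕ → ℕ)
    (hx : ∀ i ∈ Finset.Icc 1 p, x i = i - α i)
    (hy : ∀ i ∈ Finset.Icc 1 p, y i = i - β i) :
    (∃ T : ℕ → ℕ → ℕ,
      (∀ i ∈ Finset.Icc 1 p, ∀ j ∈ Finset.Icc 1 p, T i j ≤ 1) ∧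
      (∀ i ∈ Finset.Icc 1 p, ∑ j ∈ Finset.Icc 1 p, T i j = x i) ∧
      (∀ j ∈ Finset.Icc 1 p, ∑ i ∈ Finset.Icc 1 p, T i j = y j)) ↔
    ((∑ i ∈ Finset.Icc 1 p, α (p - i + 1) = ∑ i ∈ Finset.Icc 1 p, β i) ∧
     (∀ k ∈ Finset.Icc 1 p,
       ∑ i ∈ Finset.Icc 1 k, β i ≤ ∑ i ∈ Finset.Icc 1 k, α (p - i + 1))) := by
  constructor
  · rintro ⟨T, hT01, hTrow, hTcol⟩
    -- x i + α i = i and y j + β j = j on Icc 1 p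
    have hxα : ∀ i ∈ Icc 1 p, x i + α i = i := by
      intro i hi
      have h1 := hx i hi; have h2 := hα i hi
      simp only [mem_Icc] at hi; omega
    have hyβ : ∀ j ∈ Icc 1 p, y j + β j = j := by
      intro j hj
      have h1 := hy j hj; have h2 := hβ j hj
      simp only [mem_Icc] at hj; omega
    have hxy : ∑ i ∈ Icc 1 p, x i = ∑ j ∈ Icc 1 p, y j := by
      calc ∑ i ∈ Icc 1 p, x i = ∑ i ∈ Icc 1 p, ∑ j ∈ Icc 1 p, T i j :=
            (Finset.sum_congr rfl (fun i hi => (hTrow i hi).symm))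
        _ = ∑ j ∈ Icc 1 p, ∑ i ∈ Icc 1 p, T i j := Finset.sum_comm
        _ = ∑ j ∈ Icc 1 p, y j := Finset.sum_congr rfl hTcol
    have hsum1 : ∑ i ∈ Icc 1 p, x i + ∑ i ∈ Icc 1 p, α i = ∑ i ∈ Icc 1 p, i := by
      rw [← Finset.sum_add_distrib]; exact Finset.sum_congr rfl hxα
    have hsum2 : ∑ j ∈ Icc 1 p, y j + ∑ j ∈ Icc 1 p, β j = ∑ j ∈ Icc 1 p, (j : ℕ) := by
      rw [← Finset.sum_add_distrib]; exact Finset.sum_congr rfl hyβ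
    have hαβ : ∑ i ∈ Icc 1 p, α i = ∑ i ∈ Icc 1 p, β i := by omega
    have hrev : ∑ i ∈ Icc 1 p, α (p - i + 1) = ∑ i ∈ Icc 1 p, α i := by
      rw [sum_reindex14 p p α le_rfl, show p - p + 1 = 1 from by omega]
    refine ⟨by omega, ?_⟩
    intro k hk
    simp only [mem_Icc] at hk
    obtain ⟨hk1, hkp⟩ := hk
    -- split Icc 1 p into Icc 1 k and Icc (k+1) p
    have hsplit : Icc 1 p = Icc 1 k ∪ Icc (k + 1) p := by
      ext a; simp only [mem_union, mem_Icc]; omega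
    have hdisj : Disjoint (Icc 1 k) (Icc (k + 1) p) := by
      rw [Finset.disjoint_left]; intro a ha hb
      simp only [mem_Icc] at ha hb; omega
    -- row lower bound
    have hrowlb : ∀ i ∈ Icc 1 p, x i ≤ ∑ j ∈ Icc 1 k, T i j + (p - k) := by
      intro i hi
      have hr := hTrow i hi
      rw [hsplit, Finset.sum_union hdisj] at hr
      have htail : ∑ j ∈ Icc (k + 1) p, T i j ≤ p - k := by
        calc ∑ j ∈ Icc (k + 1) p, T i j ≤ ∑ j ∈ Icc (k + 1) p, 1 :=
              Finset.sum_le_sum (fun j hj => hT01 i hi j (by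
                simp only [mem_Icc] at hj ⊢; omega))
          _ = p - k := by rw [Finset.sum_const, smul_eq_mul, mul_one, Nat.card_Icc]; omega
      omega
    have hYk : ∑ j ∈ Icc 1 k, y j = ∑ i ∈ Icc 1 p, ∑ j ∈ Icc 1 k, T i j := by
      calc ∑ j ∈ Icc 1 k, y j
          = ∑ j ∈ Icc 1 k, ∑ i ∈ Icc 1 p, T i j :=
            Finset.sum_congr rfl (fun j hj => (hTcol j (by
              simp only [mem_Icc] at hj ⊢; omega)).symm)
        _ = ∑ i ∈ Icc 1 p, ∑ j ∈ Icc 1 k, T i j := Finset.sum_comm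
    -- sum over the tail rows
    have htailsub : Icc (p - k + 1) p ⊆ Icc 1 p := by
      intro a ha; simp only [mem_Icc] at *; omega
    have hSx : ∑ i ∈ Icc (p - k + 1) p, x i
        ≤ ∑ i ∈ Icc (p - k + 1) p, ∑ j ∈ Icc 1 k, T i j + (p - k) * k := by
      calc ∑ i ∈ Icc (p - k + 1) p, x i
          ≤ ∑ i ∈ Icc (p - k + 1) p, (∑ j ∈ Icc 1 k, T i j + (p - k)) :=
            Finset.sum_le_sum (fun i hi => hrowlb i (htailsub hi))
        _ = ∑ i ∈ Icc (p - k + 1) p, ∑ j ∈ Icc 1 k, T i j + (p - k) * k := by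
            rw [Finset.sum_add_distrib, Finset.sum_const, smul_eq_mul, Nat.card_Icc]
            congr 1
            have : p + 1 - (p - k + 1) = k := by omega
            rw [this, mul_comm]
    have hSx2 : ∑ i ∈ Icc (p - k + 1) p, ∑ j ∈ Icc 1 k, T i j
        ≤ ∑ i ∈ Icc 1 p, ∑ j ∈ Icc 1 k, T i j :=
      Finset.sum_le_sum_of_subset htailsub
    have hSxα : ∑ i ∈ Icc (p - k + 1) p, x i + ∑ i ∈ Icc (p - k + 1) p, α i
        = ∑ i ∈ Icc (p - k + 1) p, i := by
      rw [← Finset.sum_add_distrib]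
      exact Finset.sum_congr rfl (fun i hi => hxα i (htailsub hi))
    have hyβk : ∑ j ∈ Icc 1 k, y j + ∑ j ∈ Icc 1 k, β j = ∑ j ∈ Icc 1 k, (j : ℕ) := by
      rw [← Finset.sum_add_distrib]
      exact Finset.sum_congr rfl (fun j hj => hyβ j (by
        simp only [mem_Icc] at hj ⊢; omega))
    have hids : ∑ i ∈ Icc (p - k + 1) p, i = ∑ j ∈ Icc 1 k, (j : ℕ) + (p - k) * k := by
      rw [← sum_reindex14 p k (fun i => i) hkp]
      have h1 : ∀ i ∈ Icc 1 k, p - i + 1 = (k - i + 1) + (p - k) := by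
        intro i hi; simp only [mem_Icc] at hi; omega
      rw [Finset.sum_congr rfl h1, Finset.sum_add_distrib, Finset.sum_const, smul_eq_mul,
        Nat.card_Icc]
      have h2 : ∑ i ∈ Icc 1 k, (k - i + 1) = ∑ i ∈ Icc 1 k, i := by
        have h3 := sum_reindex14 k k (fun i => i) le_rfl
        rw [show k - k + 1 = 1 from by omega] at h3
        exact h3
      simp only [Nat.add_sub_cancel]
      rw [h2, Nat.mul_comm]
    have hAk : ∑ i ∈ Icc 1 k, α (p - i + 1) = ∑ i ∈ Icc (p - k + 1) p, α i :=
      sum_reindex14 p k α hkp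
    rw [hAk]
    set c := (p - k) * k with hc
    omega
  · rintro ⟨htot, hdom⟩
    refine ⟨T14 p α β, ?_, ?_, ?_⟩
    · intro i _ j _; unfold T14; split_ifs <;> simp
    · intro i hi; rw [row14 p α β hα hβ htot hdom i hi, hx i hi]
    · intro j hj; rw [col14 p α β hα hβ htot hdom j hj, hy j hj]
end

section
/- Let α, β be 0-1 vectors of length p with x_i = i − α_i, y_i = i − β_i, and suppose x, y are consistent. Then α^R = β if and only if the unique realization of (x,y) is the perfect mirror PM_{ᾱ}, where ᾱ is the complement of α. -/
/-!
Row 1 of a realization of `(i - α i, j - α (p + 1 - j))` has sum `1 - α 1`, and the last column has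
sum `p - α 1` with at most `p - 1` ones below row 1. Hence row 1 vanishes except for the corner
entry `1 - α 1`, and the last column is all ones below it. Deleting row 1 and column `p` leaves a
realization of the same shape for the shifted vector `α (· + 1)`, so by induction every such
realization is the perfect mirror `PM_ᾱ`. The column sums of `PM_ᾱ` are `j - α (p + 1 - j)`, which
equal `y j = j - β j` exactly when `α (p + 1 - j) = β j`.
-/

open Finset

def perfectMirror (p : ℕ) (σ : ℕ → ℕ) (i j : ℕ) : ℕ :=
  if i + j ≤ p then 0 else if i + j = p + 1 then σ i else 1

def IsRealization (p : ℕ) (T : ℕ → ℕ → ℕ) (r c : ℕ → ℕ) : Prop :=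
  (∀ i ∈ Icc 1 p, ∀ j ∈ Icc 1 p, T i j ≤ 1) ∧
  (∀ i ∈ Icc 1 p, ∑ j ∈ Icc 1 p, T i j = r i) ∧
  (∀ j ∈ Icc 1 p, ∑ i ∈ Icc 1 p, T i j = c j)

lemma sum_Icc_one_succ {M : Type*} [AddCommMonoid M] (n : ℕ) (f : ℕ → M) :
    ∑ i ∈ Icc 1 (n + 1), f i = f 1 + ∑ i ∈ Icc 1 n, f (i + 1) := by
  rw [← add_sum_Ioc_eq_sum_Icc (by omega), ← Icc_add_one_left_eq_Ioc, ← map_add_right_Icc,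
    sum_map]
  rfl

lemma sum_Icc_eq_of_step {p k : ℕ} {f : ℕ → ℕ} (hk : k ∈ Icc 1 p) (hlt : ∀ t < k, f t = 0)
    (hgt : ∀ t, k < t → f t = 1) : ∑ t ∈ Icc 1 p, f t = f k + (p - k) := by
  rw [mem_Icc] at hk
  rw [← Ico_add_one_right_eq_Icc, ← sum_Ico_consecutive f hk.1 (by omega : k ≤ p + 1),
    Ico_add_one_right_eq_Icc, ← add_sum_Ioc_eq_sum_Icc hk.2,
    sum_eq_zero fun t ht => hlt t (mem_Ico.1 ht).2,
    sum_congr rfl fun t ht => hgt t (mem_Ioc.1 ht).1]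
  simp

lemma sum_perfectMirror_row {p i : ℕ} (σ : ℕ → ℕ) (hi : i ∈ Icc 1 p) :
    ∑ j ∈ Icc 1 p, perfectMirror p σ i j = (i - 1) + σ i := by
  rw [mem_Icc] at hi
  rw [sum_Icc_eq_of_step (k := p + 1 - i) (by simp only [mem_Icc]; omega)]
  · simp only [perfectMirror]; split_ifs <;> omega
  · intro t ht; simp only [perfectMirror]; rw [if_pos (by omega)]
  · intro t ht; simp only [perfectMirror]; rw [if_neg (by omega), if_neg (by omega)]

lemma sum_perfectMirror_col {p j : ℕ} (σ : ℕ → ℕ) (hj : j ∈ Icc 1 p) :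
    ∑ i ∈ Icc 1 p, perfectMirror p σ i j = (j - 1) + σ (p + 1 - j) := by
  rw [mem_Icc] at hj
  rw [sum_Icc_eq_of_step (k := p + 1 - j) (by simp only [mem_Icc]; omega)]
  · simp only [perfectMirror]; split_ifs <;> omega
  · intro t ht; simp only [perfectMirror]; rw [if_pos (by omega)]
  · intro t ht; simp only [perfectMirror]; rw [if_neg (by omega), if_neg (by omega)]

lemma perfectMirror_succ (n : ℕ) (σ : ℕ → ℕ) (i j : ℕ) :
    perfectMirror (n + 1) σ (i + 1) j = perfectMirror n (fun i => σ (i + 1)) i j := by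
  simp only [perfectMirror]
  split_ifs <;> omega

lemma IsRealization.corner {n a : ℕ} {T : ℕ → ℕ → ℕ} {r c : ℕ → ℕ}
    (hT : IsRealization (n + 1) T r c) (ha : a ≤ 1) (hr : r 1 = 1 - a)
    (hc : c (n + 1) = n + 1 - a) :
    (∀ j ∈ Icc 1 n, T 1 j = 0) ∧ T 1 (n + 1) = 1 - a ∧ ∀ i ∈ Icc 1 n, T (i + 1) (n + 1) = 1 := by
  obtain ⟨hle, hrow, hcol⟩ := hT
  have hmem : ∀ {i}, i ∈ Icc 1 n → i + 1 ∈ Icc 1 (n + 1) := by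
    intro i hi; simp only [mem_Icc] at hi ⊢; omega
  have htop : n + 1 ∈ Icc 1 (n + 1) := by simp
  have hrow1 := hrow 1 (by simp)
  have hcoln := hcol (n + 1) htop
  rw [sum_Icc_succ_top (by omega), hr] at hrow1
  rw [sum_Icc_one_succ, hc] at hcoln
  have hbound : ∑ i ∈ Icc 1 n, T (i + 1) (n + 1) ≤ ∑ _i ∈ Icc 1 n, 1 :=
    sum_le_sum fun i hi => hle (i + 1) (hmem hi) (n + 1) htop
  rw [sum_const, Nat.card_Icc, smul_eq_mul, mul_one, Nat.add_sub_cancel] at hbound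
  refine ⟨sum_eq_zero_iff.1 (by omega), by omega, ?_⟩
  have hfull : ∑ i ∈ Icc 1 n, T (i + 1) (n + 1) = ∑ _i ∈ Icc 1 n, 1 := by simp; omega
  exact (sum_eq_sum_iff_of_le fun i hi => hle (i + 1) (hmem hi) (n + 1) htop).1 hfull

lemma IsRealization.tail {n : ℕ} {T : ℕ → ℕ → ℕ} {r c r' c' : ℕ → ℕ}
    (hT : IsRealization (n + 1) T r c) (hrow : ∀ j ∈ Icc 1 n, T 1 j = 0)
    (hcol : ∀ i ∈ Icc 1 n, T (i + 1) (n + 1) = 1)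
    (hr' : ∀ i ∈ Icc 1 n, r' i = r (i + 1) - 1) (hc' : ∀ j ∈ Icc 1 n, c' j = c j) :
    IsRealization n (fun i j => T (i + 1) j) r' c' := by
  obtain ⟨hle, hrow', hcol'⟩ := hT
  have hmem : ∀ {i}, i ∈ Icc 1 n → i ∈ Icc 1 (n + 1) := by
    intro i hi; simp only [mem_Icc] at hi ⊢; omega
  have hmem' : ∀ {i}, i ∈ Icc 1 n → i + 1 ∈ Icc 1 (n + 1) := by
    intro i hi; simp only [mem_Icc] at hi ⊢; omega
  refine ⟨fun i hi j hj => hle _ (hmem' hi) _ (hmem hj), fun i hi => ?_, fun j hj => ?_⟩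
  · have := hrow' (i + 1) (hmem' hi)
    rw [sum_Icc_succ_top (by omega), hcol i hi] at this
    rw [hr' i hi, ← this, Nat.add_sub_cancel]
  · have := hcol' j (hmem hj)
    rw [sum_Icc_one_succ, hrow j hj, zero_add] at this
    rw [hc' j hj, ← this]

theorem IsRealization.eq_perfectMirror {p : ℕ} {α : ℕ → ℕ} {T : ℕ → ℕ → ℕ}
    (hα : ∀ i ∈ Icc 1 p, α i ≤ 1)
    (hT : IsRealization p T (fun i => i - α i) (fun j => j - α (p + 1 - j))) :
    ∀ i ∈ Icc 1 p, ∀ j ∈ Icc 1 p, T i j = perfectMirror p (fun i => 1 - α i) i j := by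
  induction p generalizing α T with
  | zero => simp
  | succ n ih =>
    obtain ⟨hrow, hcorner, hcol⟩ :=
      hT.corner (hα 1 (by simp)) (by simp) (by simp)
    have hsub := ih (α := fun i => α (i + 1))
      (fun i hi => hα (i + 1) (by simp only [mem_Icc] at hi ⊢; omega))
      (hT.tail hrow hcol (fun i _ => by omega) fun j hj => by
        simp only [mem_Icc] at hj; rw [show n + 1 + 1 - j = n + 1 - j + 1 by omega])
    intro i hi j hj
    rw [mem_Icc] at hi hj
    obtain _ | i := i
    · omega
    rw [perfectMirror_succ]
    obtain rfl | hi0 := Nat.eq_zero_or_pos i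
    · obtain hjn | rfl := hj.2.lt_or_eq
      · rw [hrow j (by simp only [mem_Icc]; omega), perfectMirror, if_pos (by omega)]
      · rw [hcorner, perfectMirror, if_neg (by omega), if_pos (by omega)]
    · obtain hjn | rfl := hj.2.lt_or_eq
      · exact hsub i (by simp only [mem_Icc]; omega) j (by simp only [mem_Icc]; omega)
      · rw [hcol i (by simp only [mem_Icc]; omega), perfectMirror, if_neg (by omega),
          if_neg (by omega)]

theorem stmt_15_general (p : ℕ) (α β : ℕ → ℕ)
    (hα : ∀ i ∈ Finset.Icc 1 p, α i ≤ 1)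
    (hβ : ∀ i ∈ Finset.Icc 1 p, β i ≤ 1)
    (x y : ℕ → ℕ)
    (hx : ∀ i ∈ Finset.Icc 1 p, x i = i - α i)
    (hy : ∀ i ∈ Finset.Icc 1 p, y i = i - β i)
    (PM : ℕ → ℕ → ℕ)
    (hPM : ∀ i j, PM i j = if i + j ≤ p then 0
      else if i + j = p + 1 then 1 - α i else 1) :
    (∀ i ∈ Finset.Icc 1 p, α (p - i + 1) = β i) ↔
    ((∀ i ∈ Finset.Icc 1 p, ∑ j ∈ Finset.Icc 1 p, PM i j = x i) ∧
     (∀ j ∈ Finset.Icc 1 p, ∑ i ∈ Finset.Icc 1 p, PM i j = y j) ∧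
     (∀ T : ℕ → ℕ → ℕ,
       (∀ i ∈ Finset.Icc 1 p, ∀ j ∈ Finset.Icc 1 p, T i j ≤ 1) →
       (∀ i ∈ Finset.Icc 1 p, ∑ j ∈ Finset.Icc 1 p, T i j = x i) →
       (∀ j ∈ Finset.Icc 1 p, ∑ i ∈ Finset.Icc 1 p, T i j = y j) →
       ∀ i ∈ Finset.Icc 1 p, ∀ j ∈ Finset.Icc 1 p, T i j = PM i j)) := by
  obtain rfl : PM = perfectMirror p (fun i => 1 - α i) := funext₂ hPM
  have hrow : ∀ i ∈ Icc 1 p, ∑ j ∈ Icc 1 p, perfectMirror p (fun i => 1 - α i) i j = x i := by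
    intro i hi
    have := hα i hi
    rw [sum_perfectMirror_row _ hi, hx i hi]
    grind
  have hcol : ∀ j ∈ Icc 1 p,
      ∑ i ∈ Icc 1 p, perfectMirror p (fun i => 1 - α i) i j = j - α (p + 1 - j) := by
    intro j hj
    have := hα (p + 1 - j) (by grind)
    rw [sum_perfectMirror_col _ hj]
    grind
  have hrev : ∀ j ∈ Icc 1 p, α (p - j + 1) = β j ↔ y j = j - α (p + 1 - j) := by
    intro j hj
    have := hα (p + 1 - j) (by grind)
    have := hβ j hj
    rw [hy j hj]
    grind
  refine ⟨fun hαβ => ?_, fun ⟨_, hc, _⟩ j hj => (hrev j hj).2 ((hc j hj).symm.trans (hcol j hj))⟩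
  have hy' : ∀ j ∈ Icc 1 p, y j = j - α (p + 1 - j) := fun j hj => (hrev j hj).1 (hαβ j hj)
  exact ⟨hrow, fun j hj => (hcol j hj).trans (hy' j hj).symm, fun T hle hr hc =>
    IsRealization.eq_perfectMirror hα
      ⟨hle, fun i hi => (hr i hi).trans (hx i hi), fun j hj => (hc j hj).trans (hy' j hj)⟩⟩

/-- Let α, β be 0-1 vectors of length p with x_i = i − α_i,
y_i = i − β_i, and suppose x, y are consistent. Then α^R = β iff the unique
realization of (x,y) is the perfect mirror PM_ᾱ. -/
theorem stmt_15 (p : ℕ) (α β : ℕ → ℕ)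
    (hα : ∀ i ∈ Finset.Icc 1 p, α i ≤ 1)
    (hβ : ∀ i ∈ Finset.Icc 1 p, β i ≤ 1)
    (x y : ℕ → ℕ)
    (hx : ∀ i ∈ Finset.Icc 1 p, x i = i - α i)
    (hy : ∀ i ∈ Finset.Icc 1 p, y i = i - β i)
    (PM : ℕ → ℕ → ℕ)
    (hPM : ∀ i j, PM i j = if i + j ≤ p then 0
      else if i + j = p + 1 then 1 - α i else 1)
    (hcons : ∃ T : ℕ → ℕ → ℕ,
      (∀ i ∈ Finset.Icc 1 p, ∀ j ∈ Finset.Icc 1 p, T i j ≤ 1) ∧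
      (∀ i ∈ Finset.Icc 1 p, ∑ j ∈ Finset.Icc 1 p, T i j = x i) ∧
      (∀ j ∈ Finset.Icc 1 p, ∑ i ∈ Finset.Icc 1 p, T i j = y j)) :
    (∀ i ∈ Finset.Icc 1 p, α (p - i + 1) = β i) ↔
    ((∀ i ∈ Finset.Icc 1 p, ∑ j ∈ Finset.Icc 1 p, PM i j = x i) ∧
     (∀ j ∈ Finset.Icc 1 p, ∑ i ∈ Finset.Icc 1 p, PM i j = y j) ∧
     (∀ T : ℕ → ℕ → ℕ,
       (∀ i ∈ Finset.Icc 1 p, ∀ j ∈ Finset.Icc 1 p, T i j ≤ 1) →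
       (∀ i ∈ Finset.Icc 1 p, ∑ j ∈ Finset.Icc 1 p, T i j = x i) →
       (∀ j ∈ Finset.Icc 1 p, ∑ i ∈ Finset.Icc 1 p, T i j = y j) →
       ∀ i ∈ Finset.Icc 1 p, ∀ j ∈ Finset.Icc 1 p, T i j = PM i j)) :=
  stmt_15_general p α β hα hβ x y hx hy PM hPM
end

section
/- Let α, β be 0-1 vectors of length p with α^R ⪰ β, and define τ_{kl} = Σ_{i=1}^{p−k} α^R_i − Σ_{j=1}^l β_j + ½(p−k−l−1)(p−k−l). Then τ_{kl} ≥ 0 for all 0 ≤ k,l ≤ p. -/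
/-!
Write `m = p - k`, `A_m = Σ_{i ≤ m} α^R_i` and `B_l = Σ_{j ≤ l} β_j`. Majorization together with
`β_j ≤ 1` gives `B_l ≤ A_m + (l - m)⁺`, and for the integer `n = m - l` the triangular number
`n (n - 1) / 2` dominates `(-n)⁺`, which absorbs the excess.
-/

open Finset

theorem sum_Icc_le_sum_Icc_add_sub {b : ℕ → ℕ} {n l : ℕ} (hb : ∀ i ∈ Icc 1 l, b i ≤ 1)
    (hnl : n ≤ l) : ∑ i ∈ Icc 1 l, b i ≤ ∑ i ∈ Icc 1 n, b i + (l - n) := by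
  have hIcc : ∀ n, Icc 1 n = Ioc 0 n := Icc_add_one_left_eq_Ioc 0
  simp only [hIcc] at hb ⊢
  rw [← sum_Ioc_consecutive b (Nat.zero_le n) hnl]
  gcongr
  calc ∑ i ∈ Ioc n l, b i ≤ #(Ioc n l) • 1 :=
        sum_le_card_nsmul _ _ _ fun i hi ↦ hb i (Ioc_subset_Ioc_left (Nat.zero_le n) hi)
    _ = l - n := by simp

theorem sum_Icc_le_sum_Icc_of_majorizes {a b : ℕ → ℕ} {p m l : ℕ}
    (hb : ∀ i ∈ Icc 1 p, b i ≤ 1)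
    (hmaj : ∀ k ∈ Icc 1 p, ∑ i ∈ Icc 1 k, b i ≤ ∑ i ∈ Icc 1 k, a i)
    (hm : m ≤ p) (hl : l ≤ p) :
    ∑ i ∈ Icc 1 l, b i ≤ ∑ i ∈ Icc 1 m, a i + (l - m) := by
  set n := min l m
  have hbn : ∑ i ∈ Icc 1 n, b i ≤ ∑ i ∈ Icc 1 n, a i := by
    rcases Nat.eq_zero_or_pos n with hn | hn
    · simp [hn]
    · exact hmaj n (mem_Icc.2 ⟨hn, (min_le_right l m).trans hm⟩)
  calc ∑ i ∈ Icc 1 l, b i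
      ≤ ∑ i ∈ Icc 1 n, b i + (l - n) :=
        sum_Icc_le_sum_Icc_add_sub (fun i hi ↦ hb i (Icc_subset_Icc_right hl hi)) (min_le_left l m)
    _ ≤ ∑ i ∈ Icc 1 m, a i + (l - m) :=
        add_le_add (hbn.trans (sum_le_sum_of_subset (Icc_subset_Icc_right (min_le_right l m))))
          (by omega)

theorem cast_sub_le_half_mul (m l : ℕ) :
    ((l - m : ℕ) : ℚ) ≤ 1 / 2 * ((m : ℚ) - l - 1) * ((m : ℚ) - l) := by
  rcases le_total l m with hlm | hml
  · obtain ⟨d, rfl⟩ := Nat.exists_eq_add_of_le hlm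
    rcases d with _ | d <;> push_cast [Nat.sub_eq_zero_of_le hlm] <;> nlinarith
  · obtain ⟨d, rfl⟩ := Nat.exists_eq_add_of_le hml
    rcases d with _ | d <;> push_cast [Nat.add_sub_cancel_left] <;> nlinarith

theorem stmt_16_general (p : ℕ) (α β : ℕ → ℕ)
    (hβ : ∀ i ∈ Finset.Icc 1 p, β i ≤ 1)
    (hmaj : ∀ k ∈ Finset.Icc 1 p,
      ∑ i ∈ Finset.Icc 1 k, β i ≤ ∑ i ∈ Finset.Icc 1 k, α (p - i + 1)) :
    ∀ k ≤ p, ∀ l ≤ p,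
      0 ≤ ∑ i ∈ Finset.Icc 1 (p - k), (α (p - i + 1) : ℚ)
        - ∑ j ∈ Finset.Icc 1 l, (β j : ℚ)
        + (1 / 2) * ((p : ℚ) - k - l - 1) * ((p : ℚ) - k - l) := by
  intro k hk l hl
  have hsum : (∑ j ∈ Icc 1 l, (β j : ℚ)) ≤
      ∑ i ∈ Icc 1 (p - k), (α (p - i + 1) : ℚ) + ((l - (p - k) : ℕ) : ℚ) := by
    exact_mod_cast sum_Icc_le_sum_Icc_of_majorizes hβ hmaj (Nat.sub_le p k) hl
  have hexcess := cast_sub_le_half_mul (p - k) l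
  rw [Nat.cast_sub hk] at hexcess
  linarith

/-- Let α, β be 0-1 vectors of length p with α^R ⪰ β, and
τ_{kl} = Σ_{i=1}^{p−k} α^R_i − Σ_{j=1}^l β_j + ½(p−k−l−1)(p−k−l).
Then τ_{kl} ≥ 0 for all 0 ≤ k,l ≤ p. -/
theorem stmt_16 (p : ℕ) (α β : ℕ → ℕ)
    (hα : ∀ i ∈ Finset.Icc 1 p, α i ≤ 1)
    (hβ : ∀ i ∈ Finset.Icc 1 p, β i ≤ 1)
    (hmaj : ∀ k ∈ Finset.Icc 1 p,
      ∑ i ∈ Finset.Icc 1 k, β i ≤ ∑ i ∈ Finset.Icc 1 k, α (p - i + 1)) :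
    ∀ k ≤ p, ∀ l ≤ p,
      0 ≤ ∑ i ∈ Finset.Icc 1 (p - k), (α (p - i + 1) : ℚ)
        - ∑ j ∈ Finset.Icc 1 l, (β j : ℚ)
        + (1 / 2) * ((p : ℚ) - k - l - 1) * ((p : ℚ) - k - l) :=
  stmt_16_general p α β hβ hmaj
end

section
/- Let α, β be 0-1 vectors of length n. The (n+2)×(n+2) beige skew mirror instance BSM(α,β) is consistent if and only if Σα = Σβ and α^R ⪰ β. -/
/-!
Double counting beige cells gives `Σ α = Σ β`. For dominance, fix `k ≤ n` and the rows
`R = {n + 1 - k, …, n + 2}`: at most `|R| (n + 2 - k)` of their beige cells lie outside the first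
`k` columns, so those columns hold at least `Σ_{i ∈ R} x^B_i - |R| (n + 2 - k)` beige cells in
total. The staircase `i + j ≥ n + 1` has row and column sums `i + 2` (and `n + 2` at the end) and
attains this bound; as `x^B_i = i + 2 - α_i` and `y^B_j = j + 2 - β_j`, the inequality reads
`Σ_{j ≤ k} β_j ≤ Σ_{n + 1 - k ≤ i ≤ n} α_i`.

Conversely, remove from the staircase one cell for each `1` of `α` and of `β`, pairing the `t`-th
`1` of `β` from the left with the `t`-th `1` of `α` from the bottom. The removed cell of such a
pair lies in the staircase exactly because of the dominance `α^R ⪰ β`.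
-/

open Finset

theorem sum_Icc_one_lt_of_lt {f : ℕ → ℕ} {i j : ℕ} (hji : j < i) (hfi : 0 < f i) :
    ∑ k ∈ Icc 1 j, f k < ∑ k ∈ Icc 1 i, f k :=
  sum_lt_sum_of_subset (Icc_subset_Icc_right hji.le) (by simp only [mem_Icc]; omega)
    (by simp only [mem_Icc]; omega) hfi
    fun _ _ _ => Nat.zero_le _

theorem eq_of_sum_Icc_one_eq {f : ℕ → ℕ} {i j : ℕ} (hfi : 0 < f i) (hfj : 0 < f j)
    (h : ∑ k ∈ Icc 1 i, f k = ∑ k ∈ Icc 1 j, f k) : i = j := by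
  rcases lt_trichotomy i j with hij | hij | hij
  · exact absurd h (sum_Icc_one_lt_of_lt hij hfj).ne
  · exact hij
  · exact absurd h (sum_Icc_one_lt_of_lt hij hfi).ne'

theorem exists_sum_Icc_one_eq {f : ℕ → ℕ} {n t : ℕ} (hf : ∀ k ∈ Icc 1 n, f k ≤ 1)
    (ht : t ∈ Icc 1 (∑ k ∈ Icc 1 n, f k)) :
    ∃ j ∈ Icc 1 n, f j = 1 ∧ ∑ k ∈ Icc 1 j, f k = t := by
  induction n with
  | zero => simp at ht
  | succ n ih =>
    rw [sum_Icc_succ_top (by omega)] at ht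
    have hfn := hf (n + 1) (by simp)
    by_cases htn : t ≤ ∑ k ∈ Icc 1 n, f k
    · obtain ⟨j, hj, hfj, hsum⟩ :=
        ih (fun k hk => hf k (Icc_subset_Icc_right n.le_succ hk)) (by simp only [mem_Icc] at ht ⊢; omega)
      exact ⟨j, Icc_subset_Icc_right n.le_succ hj, hfj, hsum⟩
    · simp only [mem_Icc] at ht
      refine ⟨n + 1, by simp, by omega, ?_⟩
      rw [sum_Icc_succ_top (by omega)]
      omega

/-- Position `i` of `f` and position `j` of `g` carry the same-numbered `1`, counted from the
left. -/
def RankMatch (n : ℕ) (f g : ℕ → ℕ) (i j : ℕ) : Prop :=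
  i ∈ Icc 1 n ∧ j ∈ Icc 1 n ∧ f i = 1 ∧ g j = 1 ∧ ∑ k ∈ Icc 1 i, f k = ∑ k ∈ Icc 1 j, g k

instance (n : ℕ) (f g : ℕ → ℕ) (i j : ℕ) : Decidable (RankMatch n f g i j) := by
  unfold RankMatch; infer_instance

theorem RankMatch.symm {n : ℕ} {f g : ℕ → ℕ} {i j : ℕ} (h : RankMatch n f g i j) :
    RankMatch n g f j i :=
  ⟨h.2.1, h.1, h.2.2.2.1, h.2.2.1, h.2.2.2.2.symm⟩

theorem RankMatch.le {n : ℕ} {f g : ℕ → ℕ} {i j : ℕ}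
    (hdom : ∀ k ∈ Icc 1 n, ∑ l ∈ Icc 1 k, g l ≤ ∑ l ∈ Icc 1 k, f l)
    (h : RankMatch n f g i j) : i ≤ j := by
  obtain ⟨-, hj, hfi, -, hsum⟩ := h
  by_contra! hij
  have := sum_Icc_one_lt_of_lt (f := f) hij (by omega)
  have := hdom j hj
  omega

theorem card_filter_rankMatch {n : ℕ} {f g : ℕ → ℕ} {i : ℕ} (s : Finset ℕ)
    (hs : Icc 1 n ⊆ s) (hi : i ∈ Icc 1 n) (hfi : f i ≤ 1) (hg : ∀ k ∈ Icc 1 n, g k ≤ 1)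
    (hfg : ∑ k ∈ Icc 1 n, f k ≤ ∑ k ∈ Icc 1 n, g k) :
    #{j ∈ s | RankMatch n f g i j} = f i := by
  rcases Nat.le_one_iff_eq_zero_or_eq_one.mp hfi with hfi0 | hfi1
  · rw [hfi0, card_eq_zero, filter_eq_empty_iff]
    exact fun j _ h => by have := h.2.2.1; omega
  · have hpos : 1 ≤ ∑ k ∈ Icc 1 i, f k := by
      simp only [mem_Icc] at hi
      rw [← Nat.sub_add_cancel hi.1, sum_Icc_succ_top (by omega), Nat.sub_add_cancel hi.1]
      omega
    have hle : ∑ k ∈ Icc 1 i, f k ≤ ∑ k ∈ Icc 1 n, f k :=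
      sum_le_sum_of_subset (Icc_subset_Icc_right (mem_Icc.mp hi).2)
    obtain ⟨j, hj, hgj, hsum⟩ := exists_sum_Icc_one_eq hg (t := ∑ k ∈ Icc 1 i, f k)
      (mem_Icc.mpr ⟨hpos, hle.trans hfg⟩)
    rw [hfi1, card_eq_one]
    refine ⟨j, eq_singleton_iff_unique_mem.mpr ⟨?_, ?_⟩⟩
    · exact mem_filter.mpr ⟨hs hj, hi, hj, hfi1, hgj, hsum.symm⟩
    · intro j' hj'
      obtain ⟨-, -, -, -, hgj', hsum'⟩ := mem_filter.mp hj'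
      exact eq_of_sum_Icc_one_eq (by omega) (by omega) (hsum'.symm.trans hsum.symm)

theorem sum_card_filter_add_sum_card_filter_sdiff {ι κ : Type*} [DecidableEq ι] [DecidableEq κ]
    (r : ι → κ → Prop) [∀ i j, Decidable (r i j)] {U R : Finset ι} {s K : Finset κ}
    (hR : R ⊆ U) (hK : K ⊆ s) :
    ∑ i ∈ R, #{j ∈ s | r i j} + ∑ j ∈ K, #{i ∈ U \ R | r i j} =
      ∑ j ∈ K, #{i ∈ U | r i j} + ∑ i ∈ R, #{j ∈ s \ K | r i j} := by
  simp only [card_filter]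
  rw [sum_congr rfl fun i _ => (sum_sdiff (f := fun j => if r i j then 1 else 0) hK).symm,
    sum_congr rfl fun j _ => (sum_sdiff (f := fun i => if r i j then 1 else 0) hR).symm,
    sum_add_distrib, sum_add_distrib, sum_comm (s := R) (t := K)]
  ring

theorem sum_Icc_reflect (f : ℕ → ℕ) {n k : ℕ} (hk : k ≤ n) :
    ∑ i ∈ Icc 1 k, f (n - i + 1) = ∑ i ∈ Icc (n + 1 - k) n, f i :=
  sum_nbij' (fun i => n - i + 1) (fun i => n - i + 1)
    (fun i hi => by simp only [mem_Icc] at hi ⊢; omega)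
    (fun i hi => by simp only [mem_Icc] at hi ⊢; omega)
    (fun i hi => by simp only [mem_Icc] at hi; omega)
    (fun i hi => by simp only [mem_Icc] at hi; omega) (fun _ _ => rfl)

theorem sum_Icc_ite_le (f : ℕ → ℕ) {a b n : ℕ} (hn : n ≤ b) :
    ∑ i ∈ Icc a b, (if i ≤ n then f i else 0) = ∑ i ∈ Icc a n, f i := by
  rw [← sum_filter]
  congr 1
  ext i
  simp only [mem_filter, mem_Icc]
  omega

def stairCount (n i : ℕ) : ℕ := if i ≤ n then i + 2 else n + 2

theorem card_filter_stair {n i : ℕ} (hi : i ∈ Icc 1 (n + 2)) :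
    #{j ∈ Icc 1 (n + 2) | n + 1 ≤ i + j} = stairCount n i := by
  simp only [mem_Icc] at hi
  unfold stairCount
  split_ifs with hin
  · have : {j ∈ Icc 1 (n + 2) | n + 1 ≤ i + j} = Icc (n + 1 - i) (n + 2) := by
      ext j; simp only [mem_filter, mem_Icc]; omega
    rw [this, Nat.card_Icc]
    omega
  · rw [filter_true_of_mem fun j hj => by simp only [mem_Icc] at hj; omega, Nat.card_Icc]
    omega

theorem card_filter_stair' {n j : ℕ} (hj : j ∈ Icc 1 (n + 2)) :
    #{i ∈ Icc 1 (n + 2) | n + 1 ≤ i + j} = stairCount n j := by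
  simpa only [add_comm j] using card_filter_stair hj

theorem margin_add_ite_eq_stairCount {n : ℕ} {α x : ℕ → ℕ} (hα : ∀ i ∈ Icc 1 n, α i ≤ 1)
    (hx : ∀ i ∈ Icc 1 (n + 2), x i = if i ≤ n then i - α i + 2 else n + 2) :
    ∀ i ∈ Icc 1 (n + 2), x i + (if i ≤ n then α i else 0) = stairCount n i := by
  intro i hi
  rw [hx i hi, stairCount]
  split_ifs with hin
  · have := hα i (by simp only [mem_Icc] at hi ⊢; omega)
    simp only [mem_Icc] at hi
    omega
  · rfl

section Necessity

variable {n : ℕ} {α β : ℕ → ℕ} (r : ℕ → ℕ → Prop) [DecidableRel r]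
  (hrow : ∀ i ∈ Icc 1 (n + 2),
    #{j ∈ Icc 1 (n + 2) | r i j} + (if i ≤ n then α i else 0) = stairCount n i)
  (hcol : ∀ j ∈ Icc 1 (n + 2),
    #{i ∈ Icc 1 (n + 2) | r i j} + (if j ≤ n then β j else 0) = stairCount n j)
include hrow hcol

theorem sum_Icc_eq_of_margins : ∑ i ∈ Icc 1 n, α i = ∑ i ∈ Icc 1 n, β i := by
  have hdouble := sum_card_bipartiteAbove_eq_sum_card_bipartiteBelow
    (s := Icc 1 (n + 2)) (t := Icc 1 (n + 2)) (r := r)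
  have hα := sum_congr rfl hrow
  have hβ := sum_congr rfl hcol
  rw [sum_add_distrib, sum_Icc_ite_le α (by omega)] at hα
  rw [sum_add_distrib, sum_Icc_ite_le β (by omega)] at hβ
  simp only [bipartiteAbove, bipartiteBelow] at hdouble
  omega

theorem sum_Icc_le_of_margins {k : ℕ} (hk : k ≤ n) :
    ∑ i ∈ Icc 1 k, β i ≤ ∑ i ∈ Icc 1 k, α (n - i + 1) := by
  have hR : Icc (n + 1 - k) (n + 2) ⊆ Icc 1 (n + 2) := Icc_subset_Icc (by omega) le_rfl
  have hK : Icc 1 k ⊆ Icc 1 (n + 2) := Icc_subset_Icc le_rfl (by omega)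
  have hr := sum_card_filter_add_sum_card_filter_sdiff r hR hK
  -- The staircase `n + 1 ≤ i + j` attains the bound: it is empty below the rows `R` and full to
  -- the right of the columns `K`.
  have hS := sum_card_filter_add_sum_card_filter_sdiff (fun i j => n + 1 ≤ i + j) hR hK
  have hS_below : ∑ j ∈ Icc 1 k, #{i ∈ Icc 1 (n + 2) \ Icc (n + 1 - k) (n + 2) | n + 1 ≤ i + j}
      = 0 :=
    sum_eq_zero fun j hj => card_eq_zero.mpr <| filter_eq_empty_iff.mpr fun i hi => by
      simp only [mem_sdiff, mem_Icc] at hi hj; omega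
  have hS_right : ∑ i ∈ Icc (n + 1 - k) (n + 2), #{j ∈ Icc 1 (n + 2) \ Icc 1 k | n + 1 ≤ i + j}
      = ∑ i ∈ Icc (n + 1 - k) (n + 2), #(Icc 1 (n + 2) \ Icc 1 k) :=
    sum_congr rfl fun i hi => congrArg card <| filter_true_of_mem fun j hj => by
      simp only [mem_sdiff, mem_Icc] at hi hj; omega
  have hr_right : ∑ i ∈ Icc (n + 1 - k) (n + 2), #{j ∈ Icc 1 (n + 2) \ Icc 1 k | r i j}
      ≤ ∑ i ∈ Icc (n + 1 - k) (n + 2), #(Icc 1 (n + 2) \ Icc 1 k) :=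
    sum_le_sum fun i _ => card_filter_le _ _
  have hrows := sum_congr rfl fun i hi => hrow i (hR hi)
  have hcols := sum_congr rfl fun j hj => hcol j (hK hj)
  rw [sum_add_distrib, sum_Icc_ite_le α (by omega),
    ← sum_congr rfl fun i hi => card_filter_stair (hR hi)] at hrows
  have hβ : ∑ j ∈ Icc 1 k, (if j ≤ n then β j else 0) = ∑ j ∈ Icc 1 k, β j :=
    sum_congr rfl fun j hj => if_pos ((mem_Icc.mp hj).2.trans hk)
  rw [sum_add_distrib, hβ, ← sum_congr rfl fun j hj => card_filter_stair' (hK hj)] at hcols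
  rw [sum_Icc_reflect α hk]
  omega

end Necessity

/-- Beige on the staircase `n + 1 ≤ i + j` except at the matched cells; row `i` sits at position
`n + 1 - i` of the reversed sequence `α^R`. -/
def bsmTable (n : ℕ) (α β : ℕ → ℕ) (i j : ℕ) : ℕ :=
  if n + 1 ≤ i + j ∧ ¬ RankMatch n (fun k => α (n - k + 1)) β (n + 1 - i) j then 2 else 0

theorem bsmTable_eq_two_iff {n : ℕ} {α β : ℕ → ℕ} {i j : ℕ} :
    bsmTable n α β i j = 2 ↔
      n + 1 ≤ i + j ∧ ¬ RankMatch n (fun k => α (n - k + 1)) β (n + 1 - i) j := by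
  unfold bsmTable
  split_ifs with h
  · exact iff_of_true rfl h
  · exact iff_of_false (by norm_num) h

theorem bsmTable_eq_zero_or_eq_two (n : ℕ) (α β : ℕ → ℕ) (i j : ℕ) :
    bsmTable n α β i j = 0 ∨ bsmTable n α β i j = 2 := by
  unfold bsmTable
  split_ifs <;> simp

section Sufficiency

variable {n : ℕ} {α β : ℕ → ℕ} (hα : ∀ i ∈ Icc 1 n, α i ≤ 1) (hβ : ∀ i ∈ Icc 1 n, β i ≤ 1)
  (hsum : ∑ i ∈ Icc 1 n, α i = ∑ i ∈ Icc 1 n, β i)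
  (hdom : ∀ k ∈ Icc 1 n, ∑ i ∈ Icc 1 k, β i ≤ ∑ i ∈ Icc 1 k, α (n - i + 1))

include hdom in
theorem add_le_of_rankMatch {i j : ℕ}
    (h : RankMatch n (fun k => α (n - k + 1)) β (n + 1 - i) j) : n + 1 ≤ i + j := by
  have hle := h.le hdom
  have hi := mem_Icc.mp h.1
  omega

include hα in
theorem reflect_le_one : ∀ k ∈ Icc 1 n, α (n - k + 1) ≤ 1 := fun k hk =>
  hα _ (by simp only [mem_Icc] at hk ⊢; omega)

theorem sum_Icc_reflect_self : ∑ k ∈ Icc 1 n, α (n - k + 1) = ∑ k ∈ Icc 1 n, α k := by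
  rw [sum_Icc_reflect α le_rfl, Nat.add_sub_cancel_left]

include hα hβ hsum in
theorem card_filter_rankMatch_row {i : ℕ} (hi : i ∈ Icc 1 (n + 2)) :
    #{j ∈ Icc 1 (n + 2) | RankMatch n (fun k => α (n - k + 1)) β (n + 1 - i) j} =
      if i ≤ n then α i else 0 := by
  simp only [mem_Icc] at hi
  split_ifs with hin
  · rw [card_filter_rankMatch (f := fun k => α (n - k + 1)) _ (Icc_subset_Icc_right (by omega))
      (by simp only [mem_Icc]; omega) (reflect_le_one hα _ (by simp only [mem_Icc]; omega)) hβ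
      (sum_Icc_reflect_self.trans hsum).le]
    congr 1
    omega
  · exact card_eq_zero.mpr <| filter_eq_empty_iff.mpr fun j _ h => by
      have := mem_Icc.mp h.1; omega

include hα hβ hsum in
theorem card_filter_rankMatch_col {j : ℕ} (hj : j ∈ Icc 1 (n + 2)) :
    #{i ∈ Icc 1 (n + 2) | RankMatch n (fun k => α (n - k + 1)) β (n + 1 - i) j} =
      if j ≤ n then β j else 0 := by
  have hreflect : #{i ∈ Icc 1 (n + 2) | RankMatch n (fun k => α (n - k + 1)) β (n + 1 - i) j} =
      #{i ∈ Icc 1 (n + 2) | RankMatch n β (fun k => α (n - k + 1)) j i} := by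
    refine card_nbij' (fun i => n + 1 - i) (fun i => n + 1 - i) ?_ ?_ ?_ ?_
    · intro i hi
      obtain ⟨-, h⟩ := mem_filter.mp hi
      have := mem_Icc.mp h.1
      refine mem_filter.mpr ⟨?_, h.symm⟩
      simp only [mem_Icc]
      omega
    · intro i hi
      obtain ⟨-, h⟩ := mem_filter.mp hi
      have := mem_Icc.mp h.2.1
      refine mem_filter.mpr ⟨?_, ?_⟩
      · simp only [mem_Icc]
        omega
      · rw [Nat.sub_sub_self (by omega)]
        exact h.symm
    · intro i hi
      have := mem_Icc.mp (mem_filter.mp hi).2.1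
      simp only
      omega
    · intro i hi
      have := mem_Icc.mp (mem_filter.mp hi).2.2.1
      simp only
      omega
  rw [hreflect]
  simp only [mem_Icc] at hj
  split_ifs with hjn
  · exact card_filter_rankMatch (g := fun k => α (n - k + 1)) _ (Icc_subset_Icc_right (by omega))
      (by simp only [mem_Icc]; omega) (hβ j (by simp only [mem_Icc]; omega)) (reflect_le_one hα)
      (sum_Icc_reflect_self.trans hsum).ge
  · exact card_eq_zero.mpr <| filter_eq_empty_iff.mpr fun i _ h => by
      have := mem_Icc.mp h.1; omega

include hα hβ hsum hdom in
theorem card_filter_bsmTable_row {i : ℕ} (hi : i ∈ Icc 1 (n + 2)) :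
    #{j ∈ Icc 1 (n + 2) | bsmTable n α β i j = 2} + (if i ≤ n then α i else 0) =
      stairCount n i := by
  have hsub := monotone_filter_right (Icc 1 (n + 2)) fun j _ =>
    add_le_of_rankMatch hdom (i := i) (j := j)
  have hle := card_le_card hsub
  simp only [bsmTable_eq_two_iff, filter_and_not, card_sdiff_of_subset hsub]
  rw [card_filter_stair hi, card_filter_rankMatch_row hα hβ hsum hi] at hle ⊢
  omega

include hα hβ hsum hdom in
theorem card_filter_bsmTable_col {j : ℕ} (hj : j ∈ Icc 1 (n + 2)) :
    #{i ∈ Icc 1 (n + 2) | bsmTable n α β i j = 2} + (if j ≤ n then β j else 0) =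
      stairCount n j := by
  have hsub := monotone_filter_right (Icc 1 (n + 2)) fun i _ =>
    add_le_of_rankMatch hdom (i := i) (j := j)
  have hle := card_le_card hsub
  simp only [bsmTable_eq_two_iff, filter_and_not, card_sdiff_of_subset hsub]
  rw [card_filter_stair' hj, card_filter_rankMatch_col hα hβ hsum hj] at hle ⊢
  omega

end Sufficiency

/-- Let α, β be 0-1 vectors of length n. The (n+2)×(n+2) beige
skew mirror instance BSM(α,β) of 3-CCP is consistent iff Σα = Σβ and
α^R ⪰ β. Colors: 1 = azure, 2 = beige, 3 = cyan, 0 = blank. Beige sums: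
x^B_i = i − α_i + 2, y^B_i = i − β_i + 2 for i ≤ n, and n+2 for
i = n+1, n+2; azure and cyan sums are zero. -/
theorem stmt_18 (n : ℕ) (α β : ℕ → ℕ)
    (hα : ∀ i ∈ Finset.Icc 1 n, α i ≤ 1)
    (hβ : ∀ i ∈ Finset.Icc 1 n, β i ≤ 1)
    (xB yB : ℕ → ℕ)
    (hxB : ∀ i ∈ Finset.Icc 1 (n+2), xB i =
      if i ≤ n then i - α i + 2 else n + 2)
    (hyB : ∀ i ∈ Finset.Icc 1 (n+2), yB i =
      if i ≤ n then i - β i + 2 else n + 2) :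
    (∃ T : ℕ → ℕ → ℕ,
      (∀ i ∈ Finset.Icc 1 (n+2), ∀ j ∈ Finset.Icc 1 (n+2), T i j ≤ 3) ∧
      (∀ i ∈ Finset.Icc 1 (n+2),
        ((Finset.Icc 1 (n+2)).filter (fun j => T i j = 2)).card = xB i) ∧
      (∀ j ∈ Finset.Icc 1 (n+2),
        ((Finset.Icc 1 (n+2)).filter (fun i => T i j = 2)).card = yB j) ∧
      (∀ i ∈ Finset.Icc 1 (n+2),
        ((Finset.Icc 1 (n+2)).filter (fun j => T i j = 1)).card = 0) ∧
      (∀ j ∈ Finset.Icc 1 (n+2),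
        ((Finset.Icc 1 (n+2)).filter (fun i => T i j = 1)).card = 0) ∧
      (∀ i ∈ Finset.Icc 1 (n+2),
        ((Finset.Icc 1 (n+2)).filter (fun j => T i j = 3)).card = 0) ∧
      (∀ j ∈ Finset.Icc 1 (n+2),
        ((Finset.Icc 1 (n+2)).filter (fun i => T i j = 3)).card = 0)) ↔
    ((∑ i ∈ Finset.Icc 1 n, α i = ∑ i ∈ Finset.Icc 1 n, β i) ∧
     (∀ k ∈ Finset.Icc 1 n,
       ∑ i ∈ Finset.Icc 1 k, β i ≤ ∑ i ∈ Finset.Icc 1 k, α (n - i + 1))) := by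
  have hx := margin_add_ite_eq_stairCount hα hxB
  have hy := margin_add_ite_eq_stairCount hβ hyB
  constructor
  · rintro ⟨T, -, hrow, hcol, -⟩
    have hrow' := fun i hi => (hrow i hi).symm ▸ hx i hi
    have hcol' := fun j hj => (hcol j hj).symm ▸ hy j hj
    exact ⟨sum_Icc_eq_of_margins _ hrow' hcol',
      fun k hk => sum_Icc_le_of_margins _ hrow' hcol' (mem_Icc.mp hk).2⟩
  · rintro ⟨hsum, hdom⟩
    have hT := bsmTable_eq_zero_or_eq_two n α β
    refine ⟨bsmTable n α β, fun i _ j _ => ?_, fun i hi => ?_, fun j hj => ?_, ?_, ?_, ?_, ?_⟩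
    · have := hT i j; omega
    · have := card_filter_bsmTable_row hα hβ hsum hdom hi; have := hx i hi; omega
    · have := card_filter_bsmTable_col hα hβ hsum hdom hj; have := hy j hj; omega
    all_goals
      intro i _
      rw [card_eq_zero, filter_eq_empty_iff]
      intro j _
      rcases hT i j with h | h <;> rcases hT j i with h' | h' <;> omega
end
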